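/- arXiv:0901.3180 — 5 statements merged into one kernel-verified Lean document; each statement's English description precedes it below -/
import Mathlib

section
/- For a totally ordered finite set S, the collection NC(S) of non-crossing partitions of S, ordered by reverse refinement (π ≥ ρ iff π is coarser than ρ), forms a lattice with greatest element the one-class partition {S}. -/
/-- A collection of classes (of a partition) in a linear order is non-crossing if
whenever `i < j` lie in one class and `k < l` in a different class, the crossing
patterns `i < k < j < l` and `k < i < l < j` do not occur. -/
def IsNC {α : Type*} [LinearOrder α] (parts : Finset (Finset α)) : Prop :=
  ∀ i j k l : α, i < k → k < j → j < l →
    ∀ B ∈ parts, ∀ C ∈ parts, B ≠ C →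
      i ∈ B → j ∈ B → k ∈ C → l ∈ C → False

/-!
Refinement order on the partitions of `S` is a finite lattice, the meet `P ⊓ Q` having as
classes the nonempty intersections of a class of `P` with a class of `Q`. Two such
intersections that differ come from different classes of `P` or of `Q`, so a crossing of the
meet is a crossing of `P` or of `Q`: non-crossing partitions are closed under meets, and the
one-class partition is non-crossing. A finite meet-semilattice in which a set has an upper
bound has a least one (the meet of all its upper bounds), so `NC(S)` is a lattice.
-/

theorem exists_isLUB_of_finite {β : Type*} [SemilatticeInf β] [Finite β] {X : Set β}
    (hX : (upperBounds X).Nonempty) : ∃ c, IsLUB X c := by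
  let bounds := (Set.toFinite (upperBounds X)).toFinset
  have hbounds : bounds.Nonempty := by simpa [bounds] using hX
  exact ⟨bounds.inf' hbounds id,
    fun x hx => Finset.le_inf' _ _ fun u hu => (Set.Finite.mem_toFinset _).1 hu hx,
    fun u hu => Finset.inf'_le _ ((Set.Finite.mem_toFinset _).2 hu)⟩

theorem Finpartition.parts_top_of_ne_bot {α : Type*} [Lattice α] [OrderBot α] {a : α}
    [Decidable (a = ⊥)] (ha : a ≠ ⊥) : (⊤ : Finpartition a).parts = {a} :=
  (Finset.subset_singleton_iff.1 (parts_top_subset a)).resolve_left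
    (parts_nonempty _ ha).ne_empty

section NonCrossing

variable {α : Type*} [LinearOrder α] {s : Finset α}

theorem isNC_of_subsingleton {parts : Finset (Finset α)}
    (h : (parts : Set (Finset α)).Subsingleton) : IsNC parts :=
  fun _ _ _ _ _ _ _ _ hB _ hC hBC _ _ _ _ => hBC (h hB hC)

theorem isNC_top : IsNC (⊤ : Finpartition s).parts :=
  isNC_of_subsingleton (Finpartition.parts_top_subsingleton s)

theorem isNC_inf {P Q : Finpartition s} (hP : IsNC P.parts) (hQ : IsNC Q.parts) :
    IsNC (P ⊓ Q).parts := by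
  intro i j k l hik hkj hjl B hB C hC hBC hi hj hk hl
  rw [Finpartition.parts_inf] at hB hC
  obtain ⟨⟨BP, BQ⟩, hBPQ, rfl⟩ := Finset.mem_image.1 (Finset.mem_of_mem_erase hB)
  obtain ⟨⟨CP, CQ⟩, hCPQ, rfl⟩ := Finset.mem_image.1 (Finset.mem_of_mem_erase hC)
  rw [Finset.mem_product] at hBPQ hCPQ
  simp only [Finset.inf_eq_inter, Finset.mem_inter] at hi hj hk hl
  obtain rfl | hPne := eq_or_ne BP CP
  · have hQne : BQ ≠ CQ := by rintro rfl; exact hBC rfl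
    exact hQ i j k l hik hkj hjl BQ hBPQ.2 CQ hCPQ.2 hQne hi.2 hj.2 hk.2 hl.2
  · exact hP i j k l hik hkj hjl BP hBPQ.1 CP hCPQ.1 hPne hi.1 hj.1 hk.1 hl.1

end NonCrossing

/-- for a (nonempty) totally ordered finite set `S`, the collection
`NC(S)` of non-crossing partitions of `S`, ordered by reverse refinement
(`π ≤ ρ` iff `π` refines `ρ`, i.e. `ρ` is coarser), is a lattice — every pair has
a least upper bound and a greatest lower bound — whose greatest element is the
one-class partition `{S}`. -/
theorem stmt_0 (α : Type*) [LinearOrder α] [Fintype α] [Nonempty α] :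
    (∀ P Q : {P : Finpartition (Finset.univ : Finset α) // IsNC P.parts},
        ∃ R : {P : Finpartition (Finset.univ : Finset α) // IsNC P.parts}, IsLUB {P, Q} R) ∧
    (∀ P Q : {P : Finpartition (Finset.univ : Finset α) // IsNC P.parts},
        ∃ R : {P : Finpartition (Finset.univ : Finset α) // IsNC P.parts}, IsGLB {P, Q} R) ∧
    (∃ T : {P : Finpartition (Finset.univ : Finset α) // IsNC P.parts},
        T.1.parts = {Finset.univ} ∧
        ∀ P : {P : Finpartition (Finset.univ : Finset α) // IsNC P.parts}, P ≤ T) := by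
  let _ : SemilatticeInf {P : Finpartition (Finset.univ : Finset α) // IsNC P.parts} :=
    Subtype.semilatticeInf fun _ _ => isNC_inf
  let T : {P : Finpartition (Finset.univ : Finset α) // IsNC P.parts} := ⟨⊤, isNC_top⟩
  have hT : ∀ P : {P : Finpartition (Finset.univ : Finset α) // IsNC P.parts}, P ≤ T :=
    fun P => (le_top : P.1 ≤ ⊤)
  exact ⟨fun _ _ => exists_isLUB_of_finite ⟨T, fun P _ => hT P⟩,
    fun P Q => ⟨P ⊓ Q, isGLB_pair⟩,
    T, Finpartition.parts_top_of_ne_bot Finset.univ_nonempty.ne_empty, hT⟩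
end

section
/- The map sending a Temperley–Lieb diagram on 2n boundary points to the partition of {1,...,n} given by its black (shaded) regions is a bijection between Temperley–Lieb diagrams with n strands and non-crossing partitions of {1,...,n}. In particular, the number of non-crossing partitions of {1,...,n} equals the n-th Catalan number. -/
open scoped Classical

/-!
Both sets are counted by the Catalan recursion `C (n + 1) = ∑ₖ C k * C (n - k)`, so they are
equinumerous, which gives the bijection. In a non-crossing perfect matching of
`{0, …, 2n + 1}` the partner `m` of `0` is odd, and the other pairs form non-crossing perfect
matchings of the two arcs `(0, m)` and `(m, 2n + 2)`. In a non-crossing partition of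
`{0, …, n}` let `b` be the next element of the block of `0` (or `n + 1`); the blocks inside
`(0, b)` form a non-crossing partition of it, and deleting `0` leaves a non-crossing partition
of `[b, n]`, from which `0` is put back into the block of `b`. Counts only depend on the size
of the ground set, since order embeddings transport non-crossing partitions.
-/

namespace NonCrossing

open Finset

variable {α β : Type*}

section Partition

variable [DecidableEq α] {s t : Finset α} {P Q : Finset (Finset α)} {B C : Finset α} {x : α}

/-- The data of a `Finpartition s`, as a plain set of blocks. -/
def IsPartition (s : Finset α) (P : Finset (Finset α)) : Prop :=
  (P : Set (Finset α)).PairwiseDisjoint id ∧ P.sup id = s ∧ ∅ ∉ P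

namespace IsPartition

lemma subset (hP : IsPartition s P) (hB : B ∈ P) : B ⊆ s :=
  hP.2.1 ▸ le_sup (f := id) hB

lemma nonempty (hP : IsPartition s P) (hB : B ∈ P) : B.Nonempty :=
  nonempty_iff_ne_empty.2 fun h => hP.2.2 (h ▸ hB)

lemma exists_mem (hP : IsPartition s P) (hx : x ∈ s) : ∃ B ∈ P, x ∈ B := by
  rw [← hP.2.1] at hx
  simpa using mem_sup.1 hx

lemma eq_of_mem (hP : IsPartition s P) (hB : B ∈ P) (hC : C ∈ P) (hxB : x ∈ B)
    (hxC : x ∈ C) : B = C :=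
  hP.1.elim_finset hB hC x hxB hxC

lemma union (hP : IsPartition s P) (hQ : IsPartition t Q) (hst : Disjoint s t) :
    IsPartition (s ∪ t) (P ∪ Q) := by
  refine ⟨?_, by rw [sup_union, hP.2.1, hQ.2.1]; rfl, by simp [hP.2.2, hQ.2.2]⟩
  rw [coe_union, Set.pairwiseDisjoint_union]
  exact ⟨hP.1, hQ.1, fun B hB C hC _ => hst.mono (hP.subset hB) (hQ.subset hC)⟩

lemma insert_of_disjoint (hP : IsPartition s P) (hB : B.Nonempty) (hBs : Disjoint B s) :
    IsPartition (B ∪ s) (insert B P) := by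
  have hsingle : IsPartition B {B} :=
    ⟨by simp, sup_singleton, by simpa [eq_comm, ← nonempty_iff_ne_empty] using hB⟩
  simpa using hsingle.union hP hBs

lemma erase (hP : IsPartition s P) (hB : B ∈ P) : IsPartition (s \ B) (P.erase B) := by
  refine ⟨hP.1.subset (by simp), ?_, fun h => hP.2.2 (mem_of_mem_erase h)⟩
  ext x
  simp only [mem_sup, mem_erase, id, mem_sdiff]
  constructor
  · rintro ⟨C, ⟨hCB, hC⟩, hx⟩
    exact ⟨hP.subset hC hx, fun hxB => hCB (hP.eq_of_mem hC hB hx hxB)⟩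
  · rintro ⟨hx, hxB⟩
    obtain ⟨C, hC, hxC⟩ := hP.exists_mem hx
    exact ⟨C, ⟨fun h => hxB (h ▸ hxC), hC⟩, hxC⟩

lemma sum_card (hP : IsPartition s P) : ∑ B ∈ P, #B = #s := by
  have h := (card_biUnion hP.1).symm
  rw [← sup_eq_biUnion, hP.2.1] at h
  exact h

lemma eq_empty_of_empty (hP : IsPartition ∅ P) : P = ∅ :=
  eq_empty_of_forall_notMem fun _ hB => (hP.nonempty hB).ne_empty (subset_empty.1 (hP.subset hB))

end IsPartition

def restrict (P : Finset (Finset α)) (t : Finset α) : Finset (Finset α) :=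
  (P.image (· ∩ t)).erase ∅

lemma mem_restrict : C ∈ restrict P t ↔ C ≠ ∅ ∧ ∃ B ∈ P, B ∩ t = C := by
  simp [restrict]

lemma isPartition_restrict (hP : IsPartition s P) (t : Finset α) :
    IsPartition (s ∩ t) (restrict P t) := by
  refine ⟨?_, ?_, by simp [restrict]⟩
  · rw [restrict, coe_erase, coe_image]
    exact (hP.1.image_of_le fun _ => inter_subset_left).subset Set.sdiff_subset
  · rw [restrict, ← bot_eq_empty, sup_erase_bot, sup_image, ← hP.2.1, ← inf_eq_inter,
      sup_inf_distrib_right]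
    rfl

lemma restrict_union : restrict (P ∪ Q) t = restrict P t ∪ restrict Q t := by
  simp [restrict, image_union, erase_union_distrib]

lemma restrict_insert : restrict (insert B P) t = (insert (B ∩ t) (restrict P t)).erase ∅ := by
  ext C
  simp only [restrict, image_insert, mem_erase, mem_insert]
  tauto

lemma restrict_insert_of_disjoint (h : Disjoint B t) :
    restrict (insert B P) t = restrict P t := by
  rw [restrict_insert, disjoint_iff_inter_eq_empty.1 h, erase_insert_eq_erase, restrict,
    erase_idem]

lemma IsPartition.restrict_erase (hP : IsPartition s P) (hB : B ∈ P) :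
    restrict (P.erase B) t = (restrict P t).erase (B ∩ t) := by
  ext C
  simp only [mem_erase, mem_restrict]
  constructor
  · rintro ⟨hC, D, ⟨hDB, hD⟩, rfl⟩
    refine ⟨fun h => ?_, hC, D, hD, rfl⟩
    obtain ⟨x, hx⟩ := nonempty_iff_ne_empty.2 hC
    rw [h] at hx
    exact hDB (hP.eq_of_mem hD hB (mem_inter.1 (h ▸ hx)).1 (mem_inter.1 hx).1)
  · rintro ⟨hCB, hC, D, hD, rfl⟩
    exact ⟨hC, D, ⟨by rintro rfl; exact hCB rfl, hD⟩, rfl⟩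

lemma empty_notMem_restrict : ∅ ∉ restrict P t := notMem_erase ∅ _

lemma IsPartition.restrict_eq_self (hP : IsPartition s P) (h : s ⊆ t) : restrict P t = P := by
  ext C
  rw [mem_restrict]
  constructor
  · rintro ⟨-, B, hB, rfl⟩
    rwa [inter_eq_left.2 ((hP.subset hB).trans h)]
  · intro hC
    exact ⟨(hP.nonempty hC).ne_empty, C, hC, inter_eq_left.2 ((hP.subset hC).trans h)⟩

lemma IsPartition.restrict_eq_empty (hP : IsPartition s P) (h : Disjoint s t) :
    restrict P t = ∅ := by
  refine eq_empty_of_forall_notMem fun C hC => ?_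
  obtain ⟨hC, B, hB, rfl⟩ := mem_restrict.1 hC
  exact hC (disjoint_iff_inter_eq_empty.1 (h.mono_left (hP.subset hB)))

def blockOf (P : Finset (Finset α)) (x : α) : Finset α :=
  (P.filter (x ∈ ·)).sup id

lemma IsPartition.blockOf_eq (hP : IsPartition s P) (hB : B ∈ P) (hx : x ∈ B) :
    blockOf P x = B := by
  have : P.filter (x ∈ ·) = {B} :=
    eq_singleton_iff_unique_mem.2 ⟨mem_filter.2 ⟨hB, hx⟩,
      fun C hC => hP.eq_of_mem (mem_filter.1 hC).1 hB (mem_filter.1 hC).2 hx⟩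
  rw [blockOf, this, sup_singleton, id]

lemma blockOf_eq_empty (h : ∀ B ∈ P, x ∉ B) : blockOf P x = ∅ := by
  rw [blockOf, filter_false_of_mem h, sup_empty, bot_eq_empty]

lemma IsPartition.blockOf_mem (hP : IsPartition s P) (hx : x ∈ s) :
    blockOf P x ∈ P ∧ x ∈ blockOf P x := by
  obtain ⟨B, hB, hxB⟩ := hP.exists_mem hx
  rw [hP.blockOf_eq hB hxB]
  exact ⟨hB, hxB⟩

lemma IsPartition.erase_blockOf (hP : IsPartition s P) (x : α) :
    IsPartition (s \ blockOf P x) (P.erase (blockOf P x)) := by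
  by_cases hx : x ∈ s
  · exact hP.erase (hP.blockOf_mem hx).1
  · rw [blockOf_eq_empty fun B hB hxB => hx (hP.subset hB hxB), sdiff_empty,
      erase_eq_of_notMem hP.2.2]
    exact hP

lemma IsPartition.blockOf_subset (hP : IsPartition s P) (x : α) : blockOf P x ⊆ s := by
  by_cases hx : x ∈ s
  · exact hP.subset (hP.blockOf_mem hx).1
  · rw [blockOf_eq_empty fun B hB hxB => hx (hP.subset hB hxB)]
    exact empty_subset s

lemma IsPartition.insert_blockOf_erase (hP : IsPartition s P) (x : α) :
    (insert (blockOf P x) (P.erase (blockOf P x))).erase ∅ = P := by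
  by_cases hx : x ∈ s
  · rw [insert_erase (hP.blockOf_mem hx).1, erase_eq_of_notMem hP.2.2]
  · rw [blockOf_eq_empty fun B hB hxB => hx (hP.subset hB hxB), erase_insert_eq_erase,
      erase_idem, erase_eq_of_notMem hP.2.2]

lemma IsPartition.eq_insert_restrict (hP : IsPartition s P) (hB : B ∈ P) {t₁ t₂ : Finset α}
    (ht : Disjoint t₁ t₂) (hsplit : ∀ C ∈ P, C ≠ B → C ⊆ t₁ ∨ C ⊆ t₂) :
    P = insert B (restrict (P.erase B) t₁ ∪ restrict (P.erase B) t₂) := by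
  have hmem : ∀ {t u : Finset α}, Disjoint t u → (∀ C ∈ P, C ≠ B → C ⊆ t ∨ C ⊆ u) →
      ∀ C, C ∈ restrict (P.erase B) t ↔ C ∈ P ∧ C ≠ B ∧ C ⊆ t := by
    intro t u htu hsplit C
    rw [mem_restrict]
    constructor
    · rintro ⟨hne, D, hD, rfl⟩
      obtain ⟨hDB, hD⟩ := mem_erase.1 hD
      rcases hsplit D hD hDB with h | h
      · rw [inter_eq_left.2 h]
        exact ⟨hD, hDB, h⟩
      · exact absurd (disjoint_iff_inter_eq_empty.1 (htu.symm.mono_left h)) hne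
    · rintro ⟨hC, hCB, h⟩
      exact ⟨(hP.nonempty hC).ne_empty, C, mem_erase.2 ⟨hCB, hC⟩, inter_eq_left.2 h⟩
  ext C
  rw [mem_insert, mem_union, hmem ht hsplit,
    hmem ht.symm fun C hC hCB => (hsplit C hC hCB).symm]
  constructor
  · intro hC
    by_cases hCB : C = B
    · exact Or.inl hCB
    · exact Or.inr ((hsplit C hC hCB).imp (⟨hC, hCB, ·⟩) (⟨hC, hCB, ·⟩))
  · rintro (rfl | ⟨hC, -⟩ | ⟨hC, -⟩) <;> assumption

end Partition

section Crossing

variable [LinearOrder α] {s t : Finset α} {P Q : Finset (Finset α)} {B C : Finset α}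

def Crosses (B C : Finset α) : Prop :=
  ∃ i ∈ B, ∃ j ∈ B, ∃ k ∈ C, ∃ l ∈ C, i < k ∧ k < j ∧ j < l

lemma isNC_iff_pairwise :
    IsNC P ↔ (P : Set (Finset α)).Pairwise fun B C => ¬ Crosses B C := by
  constructor
  · rintro h B hB C hC hne ⟨i, hi, j, hj, k, hk, l, hl, hik, hkj, hjl⟩
    exact h i j k l hik hkj hjl B hB C hC hne hi hj hk hl
  · intro h i j k l hik hkj hjl B hB C hC hne hi hj hk hl
    exact h hB hC hne ⟨i, hi, j, hj, k, hk, l, hl, hik, hkj, hjl⟩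

lemma _root_.IsNC.not_crosses (h : IsNC P) (hB : B ∈ P) (hC : C ∈ P) (hne : B ≠ C) :
    ¬ Crosses B C :=
  isNC_iff_pairwise.1 h hB hC hne

lemma _root_.IsNC.subset (h : IsNC P) (hQ : Q ⊆ P) : IsNC Q :=
  isNC_iff_pairwise.2 ((isNC_iff_pairwise.1 h).mono (coe_subset.2 hQ))

lemma Crosses.mono {B' C' : Finset α} (h : Crosses B C) (hB : B ⊆ B') (hC : C ⊆ C') :
    Crosses B' C' := by
  obtain ⟨i, hi, j, hj, k, hk, l, hl, hikjl⟩ := h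
  exact ⟨i, hB hi, j, hB hj, k, hC hk, l, hC hl, hikjl⟩

lemma isNC_restrict (h : IsNC P) (t : Finset α) : IsNC (restrict P t) := by
  rw [isNC_iff_pairwise]
  intro B' hB' C' hC' hne hcross
  obtain ⟨-, B, hB, rfl⟩ := mem_restrict.1 hB'
  obtain ⟨-, C, hC, rfl⟩ := mem_restrict.1 hC'
  exact h.not_crosses hB hC (by rintro rfl; exact hne rfl)
    (hcross.mono inter_subset_left inter_subset_left)

lemma not_crosses_of_gap {a b : α} (hC : ∀ x ∈ C, a < x ∧ x < b)
    (hB : ∀ y ∈ B, y ≤ a ∨ b ≤ y) : ¬ Crosses B C ∧ ¬ Crosses C B := by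
  constructor
  · rintro ⟨i, hi, j, hj, k, hk, l, hl, hik, hkj, hjl⟩
    have := hC k hk
    have := hC l hl
    rcases hB j hj with h | h <;> order
  · rintro ⟨i, hi, j, hj, k, hk, l, hl, hik, hkj, hjl⟩
    have := hC i hi
    have := hC j hj
    rcases hB k hk with h | h <;> order

lemma not_crosses_insert {a c : α} (hc : c ∈ B) (hac : a < c) (hC : ∀ x ∈ C, c < x)
    (h : ¬ Crosses B C ∧ ¬ Crosses C B) :
    ¬ Crosses (insert a B) C ∧ ¬ Crosses C (insert a B) := by
  constructor
  · rintro ⟨i, hi, j, hj, k, hk, l, hl, hik, hkj, hjl⟩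
    have hck := hC k hk
    have hjB : j ∈ B := (mem_insert.1 hj).resolve_left (by order)
    rcases mem_insert.1 hi with rfl | hiB
    · exact h.1 ⟨c, hc, j, hjB, k, hk, l, hl, hck, hkj, hjl⟩
    · exact h.1 ⟨i, hiB, j, hjB, k, hk, l, hl, hik, hkj, hjl⟩
  · rintro ⟨i, hi, j, hj, k, hk, l, hl, hik, hkj, hjl⟩
    have hci := hC i hi
    have hkB : k ∈ B := (mem_insert.1 hk).resolve_left (by order)
    have hlB : l ∈ B := (mem_insert.1 hl).resolve_left (by order)
    exact h.2 ⟨i, hi, j, hj, k, hkB, l, hlB, hik, hkj, hjl⟩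

lemma _root_.IsNC.lt_of_mem (hnc : IsNC P) (hP : IsPartition s P) (hB : B ∈ P) (hC : C ∈ P)
    (hne : B ≠ C) {u v x : α} (hu : u ∈ B) (hv : v ∈ B) (hx : x ∈ C) (hvx : v < x)
    (huC : ∀ y ∈ C, u < y) {y : α} (hy : y ∈ C) : v < y := by
  have hyv : y ≠ v := fun h => hne (hP.eq_of_mem hB hC hv (h ▸ hy))
  by_contra! hyv'
  exact hnc.not_crosses hB hC hne
    ⟨u, hu, v, hv, y, hy, x, hx, huC y hy, lt_of_le_of_ne hyv' hyv, hvx⟩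

lemma _root_.IsNC.subset_Ioo [LocallyFiniteOrder α] (hnc : IsNC P) (hP : IsPartition s P)
    (hB : B ∈ P) (hC : C ∈ P) (hne : B ≠ C) {u v x : α} (hu : u ∈ B) (hv : v ∈ B) (hx : x ∈ C) (hux : u < x)
    (hxv : x < v) : C ⊆ Ioo u v := by
  intro y hy
  have hyu : y ≠ u := fun h => hne (hP.eq_of_mem hB hC hu (h ▸ hy))
  have hyv : y ≠ v := fun h => hne (hP.eq_of_mem hB hC hv (h ▸ hy))
  rw [mem_Ioo]
  constructor
  · by_contra! hyu'
    exact hnc.not_crosses hC hB hne.symm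
      ⟨y, hy, x, hx, u, hu, v, hv, lt_of_le_of_ne hyu' hyu, hux, hxv⟩
  · by_contra! hvy
    exact hnc.not_crosses hB hC hne
      ⟨u, hu, v, hv, x, hx, y, hy, hux, hxv, lt_of_le_of_ne hvy hyv.symm⟩

end Crossing

section Count

noncomputable def partitions [DecidableEq α] (s : Finset α) : Finset (Finset (Finset α)) :=
  s.powerset.powerset.filter (IsPartition s)

noncomputable def ncPartitions [LinearOrder α] (s : Finset α) : Finset (Finset (Finset α)) :=
  (partitions s).filter IsNC

noncomputable def ncMatchings [LinearOrder α] (s : Finset α) : Finset (Finset (Finset α)) :=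
  (ncPartitions s).filter fun P => ∀ B ∈ P, #B = 2

variable {s : Finset α} {P : Finset (Finset α)}

lemma mem_partitions [DecidableEq α] : P ∈ partitions s ↔ IsPartition s P := by
  rw [partitions, mem_filter, mem_powerset]
  exact and_iff_right_of_imp fun hP _ hB => mem_powerset.2 (hP.subset hB)

variable [LinearOrder α]

lemma mem_ncPartitions : P ∈ ncPartitions s ↔ IsPartition s P ∧ IsNC P := by
  rw [ncPartitions, mem_filter, mem_partitions]

lemma mem_ncMatchings :
    P ∈ ncMatchings s ↔ (IsPartition s P ∧ IsNC P) ∧ ∀ B ∈ P, #B = 2 := by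
  rw [ncMatchings, mem_filter, mem_ncPartitions]

lemma restrict_mem_ncPartitions {t : Finset α} (hP : P ∈ ncPartitions s) (ht : t ⊆ s) :
    restrict P t ∈ ncPartitions t := by
  obtain ⟨hpart, hnc⟩ := mem_ncPartitions.1 hP
  have hpart' := isPartition_restrict hpart t
  rw [inter_eq_right.2 ht] at hpart'
  exact mem_ncPartitions.2 ⟨hpart', isNC_restrict hnc t⟩

lemma card_eq_two_mul_of_mem_ncMatchings (hP : P ∈ ncMatchings s) : #s = 2 * #P := by
  obtain ⟨⟨hpart, -⟩, hcard⟩ := mem_ncMatchings.1 hP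
  rw [← hpart.sum_card, sum_congr rfl hcard, sum_const, smul_eq_mul, mul_comm]

lemma ncPartitions_empty : ncPartitions (∅ : Finset α) = {∅} := by
  ext P
  rw [mem_ncPartitions, mem_singleton]
  constructor
  · exact fun h => h.1.eq_empty_of_empty
  · rintro rfl
    exact ⟨⟨by simp, by simp, by simp⟩, isNC_iff_pairwise.2 (by simp)⟩

lemma ncMatchings_empty : ncMatchings (∅ : Finset α) = {∅} := by
  rw [ncMatchings, ncPartitions_empty, filter_singleton, if_pos (by simp)]

end Count

section Transport

variable {s : Finset α} {P : Finset (Finset α)}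

lemma isPartition_image_map_iff [DecidableEq α] [DecidableEq β] (f : α ↪ β) :
    IsPartition (s.map f) (P.image (map f)) ↔ IsPartition s P := by
  have hsup : P.sup (map f) = (P.sup id).map f :=
    (apply_sup_eq_sup_comp (map f) (fun _ _ => map_union _ _) (map_empty f)).symm
  simp only [IsPartition, coe_image, (map_injective f).injOn.pairwiseDisjoint_image, sup_image,
    Function.id_comp, hsup, map_inj, mem_image, map_eq_empty, exists_eq_right]
  simp only [Set.PairwiseDisjoint, Set.Pairwise, Function.onFun, id, disjoint_map]

variable [LinearOrder α] [LinearOrder β] (f : α ↪o β)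

lemma crosses_map_iff {B C : Finset α} :
    Crosses (B.map f.toEmbedding) (C.map f.toEmbedding) ↔ Crosses B C := by
  unfold Crosses
  simp only [mem_map, RelEmbedding.coe_toEmbedding, exists_exists_and_eq_and,
    OrderEmbedding.lt_iff_lt]

lemma isNC_image_map_iff : IsNC (P.image (map f.toEmbedding)) ↔ IsNC P := by
  rw [isNC_iff_pairwise, isNC_iff_pairwise, coe_image,
    (map_injective _).injOn.pairwise_image]
  unfold Function.onFun
  simp only [crosses_map_iff]

lemma ncPartitions_map (s : Finset α) :
    ncPartitions (s.map f.toEmbedding) = (ncPartitions s).image (image (map f.toEmbedding)) := by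
  ext Q
  simp only [mem_image, mem_ncPartitions]
  constructor
  · rintro ⟨hQ, hnc⟩
    have hQs : Q ⊆ s.powerset.image (map f.toEmbedding) := fun B hB => by
      obtain ⟨u, hu, rfl⟩ := subset_map_iff.1 (hQ.subset hB)
      exact mem_image_of_mem _ (mem_powerset.2 hu)
    obtain ⟨P, -, rfl⟩ := subset_image_iff.1 hQs
    exact ⟨P, ⟨(isPartition_image_map_iff _).1 hQ, (isNC_image_map_iff f).1 hnc⟩, rfl⟩
  · rintro ⟨P, ⟨hP, hnc⟩, rfl⟩
    exact ⟨(isPartition_image_map_iff _).2 hP, (isNC_image_map_iff f).2 hnc⟩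

lemma ncMatchings_map (s : Finset α) :
    ncMatchings (s.map f.toEmbedding) = (ncMatchings s).image (image (map f.toEmbedding)) := by
  rw [ncMatchings, ncPartitions_map, filter_image, ncMatchings]
  congr! 2 with P
  simp only [forall_mem_image, card_map]

lemma card_ncPartitions_map (s : Finset α) :
    #(ncPartitions (s.map f.toEmbedding)) = #(ncPartitions s) := by
  rw [ncPartitions_map, card_image_of_injective _ (image_injective (map_injective _))]

lemma card_ncMatchings_map (s : Finset α) :
    #(ncMatchings (s.map f.toEmbedding)) = #(ncMatchings s) := by
  rw [ncMatchings_map, card_image_of_injective _ (image_injective (map_injective _))]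

lemma card_ncPartitions_eq_range (s : Finset α) :
    #(ncPartitions s) = #(ncPartitions (range #s)) := by
  rw [← map_orderEmbOfFin_univ s rfl, card_ncPartitions_map, ← Nat.Iio_eq_range,
    ← Fin.map_valEmbedding_univ, card_map, card_univ, Fintype.card_fin]
  exact (card_ncPartitions_map (Fin.valOrderEmb _) univ).symm

lemma card_ncMatchings_eq_range (s : Finset α) :
    #(ncMatchings s) = #(ncMatchings (range #s)) := by
  rw [← map_orderEmbOfFin_univ s rfl, card_ncMatchings_map, ← Nat.Iio_eq_range,
    ← Fin.map_valEmbedding_univ, card_map, card_univ, Fintype.card_fin]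
  exact (card_ncMatchings_map (Fin.valOrderEmb _) univ).symm

end Transport

section Finpartition

variable [DecidableEq α]

def finpartitionEquiv (s : Finset α) (p : Finset (Finset α) → Prop) [DecidablePred p] :
    {π : Finpartition s // p π.parts} ≃ (partitions s).filter p where
  toFun π := ⟨π.1.parts, mem_filter.2 ⟨mem_partitions.2
    ⟨supIndep_iff_pairwiseDisjoint.1 π.1.supIndep, π.1.sup_parts, π.1.bot_notMem⟩, π.2⟩⟩
  invFun P :=
    have hP := mem_partitions.1 (mem_filter.1 P.2).1
    ⟨⟨P.1, supIndep_iff_pairwiseDisjoint.2 hP.1, hP.2.1, hP.2.2⟩, (mem_filter.1 P.2).2⟩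
  left_inv _ := rfl
  right_inv _ := rfl

lemma card_finpartition_subtype (s : Finset α) (p : Finset (Finset α) → Prop) [DecidablePred p]
    [Fintype {π : Finpartition s // p π.parts}] :
    Fintype.card {π : Finpartition s // p π.parts} = #((partitions s).filter p) :=
  (Fintype.card_congr (finpartitionEquiv s p)).trans (Fintype.card_coe _)

end Finpartition

section Nat

variable {N m : ℕ} {P P₁ P₂ : Finset (Finset ℕ)} {B C : Finset ℕ}

lemma _root_.IsNC.subset_Ioo_or_subset_Ioo (hnc : IsNC P) (hP : IsPartition (range N) P)
    (hB : B ∈ P) (hC : C ∈ P) (hne : B ≠ C) (h0 : 0 ∈ B) (hm : m ∈ B) (hm0 : 0 < m) :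
    C ⊆ Ioo 0 m ∨ C ⊆ Ioo m N := by
  have hCB : ∀ {y}, y ∈ B → y ∉ C := fun hyB hyC => hne (hP.eq_of_mem hB hC hyB hyC)
  have hC0 : ∀ y ∈ C, 0 < y := fun y hy => Nat.pos_of_ne_zero fun h => hCB h0 (h ▸ hy)
  obtain ⟨x, hx⟩ := hP.nonempty hC
  rcases lt_trichotomy x m with hxm | rfl | hmx
  · exact Or.inl (hnc.subset_Ioo hP hB hC hne h0 hm hx (hC0 x hx) hxm)
  · exact absurd hx (hCB hm)
  · exact Or.inr fun y hy => mem_Ioo.2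
      ⟨hnc.lt_of_mem hP hB hC hne h0 hm hx hmx hC0 hy, mem_range.1 (hP.subset hC hy)⟩

lemma ncMatchings_decompose (hP : P ∈ ncMatchings (range N)) (hN : 0 < N) :
    ∃ m, 0 < m ∧ m < N ∧ blockOf P 0 = {0, m} ∧
      restrict (P.erase {0, m}) (Ioo 0 m) ∈ ncMatchings (Ioo 0 m) ∧
      restrict (P.erase {0, m}) (Ioo m N) ∈ ncMatchings (Ioo m N) ∧
      P = insert {0, m}
        (restrict (P.erase {0, m}) (Ioo 0 m) ∪ restrict (P.erase {0, m}) (Ioo m N)) := by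
  obtain ⟨⟨hpart, hnc⟩, hcard⟩ := mem_ncMatchings.1 hP
  obtain ⟨hB, h0⟩ := hpart.blockOf_mem (mem_range.2 hN)
  obtain ⟨m, hm0, hBm⟩ : ∃ m, 0 < m ∧ blockOf P 0 = {0, m} := by
    obtain ⟨a, c, hac, habc⟩ := card_eq_two.1 (hcard _ hB)
    rw [habc, mem_insert, mem_singleton] at h0
    rcases h0 with rfl | rfl
    · exact ⟨c, Nat.pos_of_ne_zero hac.symm, habc⟩
    · exact ⟨a, Nat.pos_of_ne_zero hac, habc.trans (pair_comm _ _)⟩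
  rw [hBm] at hB
  have hmN : m < N := mem_range.1 (hpart.subset hB (by simp))
  have hdisj : Disjoint (Ioo 0 m) (Ioo m N) :=
    disjoint_left.2 fun x hx hx' => by simp only [mem_Ioo] at hx hx'; omega
  have hsplit := hpart.eq_insert_restrict hB hdisj fun C hC hne =>
    hnc.subset_Ioo_or_subset_Ioo hpart hB hC (Ne.symm hne) (by simp) (by simp) hm0
  have hpiece : ∀ t, t ⊆ range N \ {0, m} → restrict (P.erase {0, m}) t ⊆ P →
      restrict (P.erase {0, m}) t ∈ ncMatchings t := fun t ht hsub => by
    have hpart' := isPartition_restrict (hpart.erase hB) t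
    rw [inter_eq_right.2 ht] at hpart'
    exact mem_ncMatchings.2 ⟨⟨hpart', hnc.subset hsub⟩, fun C hC => hcard C (hsub hC)⟩
  refine ⟨m, hm0, hmN, hBm, hpiece _ ?_ ?_, hpiece _ ?_ ?_, hsplit⟩
  · intro x hx
    simp only [mem_Ioo] at hx
    simp only [mem_sdiff, mem_range, mem_insert, mem_singleton]
    omega
  · exact fun C hC => hsplit ▸ mem_insert_of_mem (mem_union_left _ hC)
  · intro x hx
    simp only [mem_Ioo] at hx
    simp only [mem_sdiff, mem_range, mem_insert, mem_singleton]
    omega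
  · exact fun C hC => hsplit ▸ mem_insert_of_mem (mem_union_right _ hC)

lemma insert_pair_union_mem_ncMatchings (hm0 : 0 < m) (hmN : m < N)
    (h₁ : P₁ ∈ ncMatchings (Ioo 0 m)) (h₂ : P₂ ∈ ncMatchings (Ioo m N)) :
    insert {0, m} (P₁ ∪ P₂) ∈ ncMatchings (range N) := by
  obtain ⟨⟨hpart₁, hnc₁⟩, hcard₁⟩ := mem_ncMatchings.1 h₁
  obtain ⟨⟨hpart₂, hnc₂⟩, hcard₂⟩ := mem_ncMatchings.1 h₂
  have hdisj : Disjoint (Ioo 0 m) (Ioo m N) :=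
    disjoint_left.2 fun x hx hx' => by simp only [mem_Ioo] at hx hx'; omega
  have hdisj' : Disjoint {0, m} (Ioo 0 m ∪ Ioo m N) := by
    simp only [disjoint_insert_left, disjoint_singleton_left, mem_union, mem_Ioo]
    omega
  have hpart : IsPartition (range N) (insert {0, m} (P₁ ∪ P₂)) := by
    convert (hpart₁.union hpart₂ hdisj).insert_of_disjoint (insert_nonempty 0 {m}) hdisj'
      using 1
    ext x
    simp only [mem_range, mem_union, mem_insert, mem_singleton, mem_Ioo]
    omega
  have hnc : IsNC (insert {0, m} (P₁ ∪ P₂)) := by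
    rw [isNC_iff_pairwise, coe_insert, coe_union, Set.pairwise_insert, Set.pairwise_union]
    refine ⟨⟨isNC_iff_pairwise.1 hnc₁, isNC_iff_pairwise.1 hnc₂, fun C hC D hD _ =>
      not_crosses_of_gap (fun x hx => mem_Ioo.1 (hpart₂.subset hD hx))
        fun y hy => Or.inl (mem_Ioo.1 (hpart₁.subset hC hy)).2.le⟩, fun C hC _ => ?_⟩
    rcases hC with hC | hC
    · exact not_crosses_of_gap (fun x hx => mem_Ioo.1 (hpart₁.subset hC hx)) (by simp)
    · exact not_crosses_of_gap (fun x hx => mem_Ioo.1 (hpart₂.subset hC hx)) (by simp)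
  refine mem_ncMatchings.2 ⟨⟨hpart, hnc⟩, fun C hC => ?_⟩
  rcases mem_insert.1 hC with rfl | hC
  · exact card_pair hm0.ne
  · exact (mem_union.1 hC).elim (hcard₁ C) (hcard₂ C)

lemma pair_notMem_union (h₁ : IsPartition (Ioo 0 m) P₁) (h₂ : IsPartition (Ioo m N) P₂) :
    {0, m} ∉ P₁ ∪ P₂ := fun h => by
  rcases mem_union.1 h with h | h
  · simpa using h₁.subset h (mem_insert_self 0 {m})
  · simpa using h₂.subset h (mem_insert_self 0 {m})

lemma card_ncMatchings_range_add_two (n : ℕ) :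
    #(ncMatchings (range (2 * n + 2))) = ∑ k ∈ range (n + 1),
      #(ncMatchings (Ioo 0 (2 * k + 1))) * #(ncMatchings (Ioo (2 * k + 1) (2 * n + 2))) := by
  simp_rw [← card_product]
  rw [← card_sigma]
  refine card_bij' (fun P _ => ⟨(blockOf P 0).sup id / 2,
      restrict (P.erase (blockOf P 0)) (Ioo 0 ((blockOf P 0).sup id)),
      restrict (P.erase (blockOf P 0)) (Ioo ((blockOf P 0).sup id) (2 * n + 2))⟩)
    (fun q _ => insert {0, 2 * q.1 + 1} (q.2.1 ∪ q.2.2)) ?_ ?_ ?_ ?_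
  · intro P hP
    obtain ⟨m, hm0, hmN, hBm, h₁, h₂, -⟩ := ncMatchings_decompose hP (by omega)
    have hodd : 2 * (m / 2) + 1 = m := by
      have := card_eq_two_mul_of_mem_ncMatchings h₁
      rw [Nat.card_Ioo] at this
      omega
    simp only [hBm, mem_sigma, mem_range, mem_product, hodd, sup_insert, sup_singleton, id,
      zero_max]
    exact ⟨by omega, h₁, h₂⟩
  · rintro ⟨k, P₁, P₂⟩ hq
    simp only [mem_sigma, mem_range, mem_product] at hq
    exact insert_pair_union_mem_ncMatchings (m := 2 * k + 1) (by omega) (by omega) hq.2.1 hq.2.2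
  · intro P hP
    obtain ⟨m, hm0, hmN, hBm, h₁, -, hsplit⟩ := ncMatchings_decompose hP (by omega)
    have hodd : 2 * (m / 2) + 1 = m := by
      have := card_eq_two_mul_of_mem_ncMatchings h₁
      rw [Nat.card_Ioo] at this
      omega
    simp only [hBm, hodd, sup_insert, sup_singleton, id, zero_max]
    exact hsplit.symm
  · rintro ⟨k, P₁, P₂⟩ hq
    simp only [mem_sigma, mem_range, mem_product] at hq
    obtain ⟨hk, h₁, h₂⟩ := hq
    have hpart₁ := (mem_ncMatchings.1 h₁).1.1
    have hpart₂ := (mem_ncMatchings.1 h₂).1.1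
    have hdisj : Disjoint (Ioo 0 (2 * k + 1)) (Ioo (2 * k + 1) (2 * n + 2)) :=
      disjoint_left.2 fun x hx hx' => by simp only [mem_Ioo] at hx hx'; omega
    have hB := (mem_ncMatchings.1 (insert_pair_union_mem_ncMatchings (N := 2 * n + 2)
      (m := 2 * k + 1) (by omega) (by omega) h₁ h₂)).1.1.blockOf_eq (mem_insert_self _ _)
      (mem_insert_self 0 _)
    simp only [hB, erase_insert (pair_notMem_union hpart₁ hpart₂), restrict_union,
      hpart₁.restrict_eq_self subset_rfl, hpart₁.restrict_eq_empty hdisj,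
      hpart₂.restrict_eq_self subset_rfl, hpart₂.restrict_eq_empty hdisj.symm, union_empty,
      empty_union, sup_insert, sup_singleton, id, zero_max, show (2 * k + 1) / 2 = k by omega]

lemma card_ncMatchings_range (n : ℕ) : #(ncMatchings (range (2 * n))) = catalan n := by
  induction n using Nat.strong_induction_on with
  | _ n ih =>
    rcases n with _ | n
    · simp [ncMatchings_empty]
    rw [mul_add_one, card_ncMatchings_range_add_two, catalan_succ,
      Fin.sum_univ_eq_sum_range (fun i => catalan i * catalan (n - i))]
    refine sum_congr rfl fun k hk => ?_
    have hk := mem_range.1 hk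
    rw [card_ncMatchings_eq_range (Ioo _ _), card_ncMatchings_eq_range (Ioo _ _), Nat.card_Ioo,
      Nat.card_Ioo, show 2 * k + 1 - 0 - 1 = 2 * k by omega,
      show 2 * n + 2 - (2 * k + 1) - 1 = 2 * (n - k) by omega, ih k (by omega),
      ih (n - k) (by omega)]

variable {n b : ℕ}

noncomputable def nextOfZero (P : Finset (Finset ℕ)) (n : ℕ) : ℕ :=
  (insert (n + 1) ((blockOf P 0).erase 0)).min' (insert_nonempty _ _)

/-- When `b` lies in no block of `P₂`, `blockOf P₂ b = ∅` and `{0}` becomes a block. -/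
def joinZero (b : ℕ) (P₁ P₂ : Finset (Finset ℕ)) : Finset (Finset ℕ) :=
  insert (insert 0 (blockOf P₂ b)) (P₁ ∪ P₂.erase (blockOf P₂ b))

lemma nextOfZero_le_succ : nextOfZero P n ≤ n + 1 :=
  min'_le _ _ (mem_insert_self _ _)

lemma nextOfZero_le {y : ℕ} (hy : y ∈ blockOf P 0) (hy0 : y ≠ 0) : nextOfZero P n ≤ y :=
  min'_le _ _ (mem_insert_of_mem (mem_erase.2 ⟨hy0, hy⟩))

lemma nextOfZero_eq_or_mem :
    nextOfZero P n = n + 1 ∨ nextOfZero P n ≠ 0 ∧ nextOfZero P n ∈ blockOf P 0 := by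
  have : nextOfZero P n ∈ insert (n + 1) ((blockOf P 0).erase 0) := min'_mem _ _
  rwa [mem_insert, mem_erase] at this

lemma nextOfZero_pos : 0 < nextOfZero P n := by
  rcases nextOfZero_eq_or_mem (P := P) (n := n) with hb | ⟨hb0, -⟩ <;> omega

lemma _root_.IsNC.subset_Ioo_or_subset_Icc (hnc : IsNC P) (hP : IsPartition (range (n + 1)) P)
    (hC : C ∈ P) (hne : C ≠ blockOf P 0) :
    C ⊆ Ioo 0 (nextOfZero P n) ∨ C ⊆ Icc (nextOfZero P n) n := by
  obtain ⟨hB, h0⟩ := hP.blockOf_mem (mem_range.2 n.succ_pos)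
  rcases nextOfZero_eq_or_mem (P := P) (n := n) with hb | ⟨hb0, hbB⟩
  · refine Or.inl fun y hy => mem_Ioo.2 ⟨Nat.pos_of_ne_zero fun hy0 => hne ?_, ?_⟩
    · exact hP.eq_of_mem hC hB hy (hy0 ▸ h0)
    · exact hb ▸ mem_range.1 (hP.subset hC hy)
  · refine (hnc.subset_Ioo_or_subset_Ioo hP hB hC hne.symm h0 hbB (Nat.pos_of_ne_zero hb0)).imp
      id fun h y hy => ?_
    have := mem_Ioo.1 (h hy)
    exact mem_Icc.2 ⟨this.1.le, by omega⟩

lemma ncPartitions_decompose (hP : P ∈ ncPartitions (range (n + 1))) :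
    joinZero (nextOfZero P n) (restrict P (Ioo 0 (nextOfZero P n)))
      (restrict P (Icc (nextOfZero P n) n)) = P := by
  obtain ⟨hpart, hnc⟩ := mem_ncPartitions.1 hP
  obtain ⟨hB, h0⟩ := hpart.blockOf_mem (mem_range.2 n.succ_pos)
  have hcases := nextOfZero_eq_or_mem (P := P) (n := n)
  set B := blockOf P 0
  set b := nextOfZero P n
  have hBn : ∀ y ∈ B, y ≤ n := fun y hy => Nat.lt_succ_iff.1 (mem_range.1 (hpart.subset hB hy))
  have hblock : blockOf (restrict P (Icc b n)) b = B ∩ Icc b n := by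
    rcases hcases with hb | ⟨-, hbB⟩
    · rw [hb, Icc_eq_empty (by omega), inter_empty,
        hpart.restrict_eq_empty (disjoint_empty_right _)]
      exact blockOf_eq_empty fun C hC => absurd hC (notMem_empty C)
    · have hbB' : b ∈ B ∩ Icc b n := mem_inter.2 ⟨hbB, mem_Icc.2 ⟨le_rfl, hBn b hbB⟩⟩
      exact (isPartition_restrict hpart _).blockOf_eq
        (mem_restrict.2 ⟨ne_empty_of_mem hbB', B, hB, rfl⟩) hbB'
  have hB0 : insert 0 (B ∩ Icc b n) = B := by
    refine (insert_subset h0 inter_subset_left).antisymm fun y hy => ?_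
    by_cases hy0 : y = 0
    · exact hy0 ▸ mem_insert_self _ _
    · exact mem_insert_of_mem (mem_inter.2 ⟨hy, mem_Icc.2 ⟨nextOfZero_le hy hy0, hBn y hy⟩⟩)
  have hB₁ : restrict (P.erase B) (Ioo 0 b) = restrict P (Ioo 0 b) := by
    have : Disjoint B (Ioo 0 b) := disjoint_left.2 fun y hy hy' => by
      have := mem_Ioo.1 hy'
      exact (nextOfZero_le hy this.1.ne').not_gt this.2
    rw [hpart.restrict_erase hB, disjoint_iff_inter_eq_empty.1 this,
      erase_eq_of_notMem empty_notMem_restrict]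
  have hdisj : Disjoint (Ioo 0 b) (Icc b n) :=
    disjoint_left.2 fun x hx hx' => by simp only [mem_Ioo, mem_Icc] at hx hx'; omega
  rw [joinZero, hblock, hB0, ← hpart.restrict_erase hB, ← hB₁]
  exact (hpart.eq_insert_restrict hB hdisj fun C hC => hnc.subset_Ioo_or_subset_Icc hpart hC).symm

lemma isPartition_joinZero (hb0 : 0 < b) (hbn : b ≤ n + 1) (h₁ : IsPartition (Ioo 0 b) P₁)
    (h₂ : IsPartition (Icc b n) P₂) : IsPartition (range (n + 1)) (joinZero b P₁ P₂) := by
  have hB := h₂.blockOf_subset b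
  have hdisj : Disjoint (Ioo 0 b) (Icc b n \ blockOf P₂ b) :=
    disjoint_left.2 fun x hx hx' => by simp only [mem_Ioo, mem_sdiff, mem_Icc] at hx hx'; omega
  have hdisj' : Disjoint (insert 0 (blockOf P₂ b)) (Ioo 0 b ∪ (Icc b n \ blockOf P₂ b)) := by
    refine disjoint_left.2 fun x hx hx' => ?_
    rcases mem_insert.1 hx with rfl | hx
    · simp only [mem_union, mem_Ioo, mem_sdiff, mem_Icc] at hx'
      omega
    · have := mem_Icc.1 (hB hx)
      simp only [mem_union, mem_Ioo, mem_sdiff, hx, not_true, and_false, or_false] at hx'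
      omega
  rw [joinZero]
  convert (h₁.union (h₂.erase_blockOf b) hdisj).insert_of_disjoint (insert_nonempty _ _) hdisj'
    using 1
  ext x
  simp only [mem_range, mem_union, mem_insert, mem_Ioo, mem_sdiff, mem_Icc]
  by_cases hx : x ∈ blockOf P₂ b
  · have := mem_Icc.1 (hB hx)
    simp only [hx, or_true, true_or, iff_true]
    omega
  · simp only [hx, or_false, not_false_eq_true, and_true]
    omega

lemma isNC_joinZero (hb0 : 0 < b) (h₁ : IsPartition (Ioo 0 b) P₁) (hnc₁ : IsNC P₁)
    (h₂ : IsPartition (Icc b n) P₂) (hnc₂ : IsNC P₂) : IsNC (joinZero b P₁ P₂) := by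
  rw [isNC_iff_pairwise, joinZero, coe_insert, coe_union, Set.pairwise_insert,
    Set.pairwise_union]
  refine ⟨⟨isNC_iff_pairwise.1 hnc₁, isNC_iff_pairwise.1 (hnc₂.subset (erase_subset _ _)),
    fun C hC D hD _ => not_crosses_of_gap (a := b - 1) (b := n + 1) (fun x hx => ?_)
      fun y hy => Or.inl ?_⟩, fun C hC _ => ?_⟩
  · have := mem_Icc.1 (h₂.subset (mem_of_mem_erase hD) hx)
    omega
  · have := mem_Ioo.1 (h₁.subset hC hy)
    omega
  rcases hC with hC | hC
  · refine not_crosses_of_gap (fun x hx => mem_Ioo.1 (h₁.subset hC hx)) fun y hy => ?_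
    rcases mem_insert.1 hy with rfl | hy
    · exact Or.inl le_rfl
    · exact Or.inr (mem_Icc.1 (h₂.blockOf_subset b hy)).1
  obtain ⟨hCB, hC⟩ := mem_erase.1 hC
  have hb : b ∈ Icc b n := by
    obtain ⟨x, hx⟩ := h₂.nonempty hC
    have := mem_Icc.1 (h₂.subset hC hx)
    exact mem_Icc.2 ⟨le_rfl, by omega⟩
  obtain ⟨hB, hbB⟩ := h₂.blockOf_mem hb
  have hbC : ∀ x ∈ C, b < x := fun x hx =>
    lt_of_le_of_ne (mem_Icc.1 (h₂.subset hC hx)).1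
      fun h => hCB (h₂.eq_of_mem hC hB hx (h ▸ hbB))
  exact not_crosses_insert hbB hb0 hbC
    ⟨hnc₂.not_crosses hB hC (Ne.symm hCB), hnc₂.not_crosses hC hB hCB⟩

lemma nextOfZero_joinZero (hb0 : 0 < b) (hbn : b ≤ n + 1) (h₁ : IsPartition (Ioo 0 b) P₁)
    (h₂ : IsPartition (Icc b n) P₂) : nextOfZero (joinZero b P₁ P₂) n = b := by
  have hB := h₂.blockOf_subset b
  have h0B : 0 ∉ blockOf P₂ b := fun h => by have := mem_Icc.1 (hB h); omega
  have hblock : blockOf (joinZero b P₁ P₂) 0 = insert 0 (blockOf P₂ b) :=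
    (isPartition_joinZero hb0 hbn h₁ h₂).blockOf_eq (mem_insert_self _ _) (mem_insert_self _ _)
  refine le_antisymm (min'_le _ _ ?_) (le_min' _ _ _ fun y hy => ?_) <;>
    rw [hblock, erase_insert h0B] at *
  · by_cases hb : b ≤ n
    · exact mem_insert_of_mem (h₂.blockOf_mem (mem_Icc.2 ⟨le_rfl, hb⟩)).2
    · exact (show b = n + 1 by omega) ▸ mem_insert_self _ _
  · rcases mem_insert.1 hy with rfl | hy
    · exact hbn
    · exact (mem_Icc.1 (hB hy)).1

lemma restrict_joinZero_Ioo (h₁ : IsPartition (Ioo 0 b) P₁) (h₂ : IsPartition (Icc b n) P₂) :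
    restrict (joinZero b P₁ P₂) (Ioo 0 b) = P₁ := by
  have hdisj : Disjoint (Ioo 0 b) (Icc b n) :=
    disjoint_left.2 fun x hx hx' => by simp only [mem_Ioo, mem_Icc] at hx hx'; omega
  have hdisj₀ : Disjoint (insert 0 (blockOf P₂ b)) (Ioo 0 b) :=
    disjoint_insert_left.2 ⟨by simp, hdisj.symm.mono_left (h₂.blockOf_subset b)⟩
  rw [joinZero, restrict_insert_of_disjoint hdisj₀, restrict_union, h₁.restrict_eq_self subset_rfl,
    (h₂.erase_blockOf b).restrict_eq_empty (hdisj.symm.mono_left sdiff_subset), union_empty]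

lemma restrict_joinZero_Icc (hb0 : 0 < b) (h₁ : IsPartition (Ioo 0 b) P₁)
    (h₂ : IsPartition (Icc b n) P₂) : restrict (joinZero b P₁ P₂) (Icc b n) = P₂ := by
  have hdisj : Disjoint (Ioo 0 b) (Icc b n) :=
    disjoint_left.2 fun x hx hx' => by simp only [mem_Ioo, mem_Icc] at hx hx'; omega
  have hB : insert 0 (blockOf P₂ b) ∩ Icc b n = blockOf P₂ b := by
    rw [insert_inter_of_notMem (by simp; omega), inter_eq_left.2 (h₂.blockOf_subset b)]
  rw [joinZero, restrict_insert, hB, restrict_union, h₁.restrict_eq_empty hdisj,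
    (h₂.erase_blockOf b).restrict_eq_self sdiff_subset, empty_union, h₂.insert_blockOf_erase]

lemma card_ncPartitions_range_add_one (n : ℕ) :
    #(ncPartitions (range (n + 1))) = ∑ k ∈ range (n + 1),
      #(ncPartitions (Ioo 0 (k + 1))) * #(ncPartitions (Icc (k + 1) n)) := by
  simp_rw [← card_product]
  rw [← card_sigma]
  refine card_bij' (fun P _ => ⟨nextOfZero P n - 1,
      restrict P (Ioo 0 (nextOfZero P n)), restrict P (Icc (nextOfZero P n) n)⟩)
    (fun q _ => joinZero (q.1 + 1) q.2.1 q.2.2) ?_ ?_ ?_ ?_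
  · intro P hP
    have hbn : nextOfZero P n ≤ n + 1 := nextOfZero_le_succ
    simp only [mem_sigma, mem_range, mem_product, Nat.sub_add_cancel nextOfZero_pos]
    refine ⟨by omega, restrict_mem_ncPartitions hP fun x hx => ?_,
      restrict_mem_ncPartitions hP fun x hx => ?_⟩ <;>
    simp only [mem_Ioo, mem_Icc] at hx <;> simp only [mem_range] <;> omega
  · rintro ⟨k, P₁, P₂⟩ hq
    simp only [mem_sigma, mem_range, mem_product, mem_ncPartitions] at hq
    obtain ⟨hk, ⟨h₁, hnc₁⟩, h₂, hnc₂⟩ := hq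
    exact mem_ncPartitions.2 ⟨isPartition_joinZero (b := k + 1) k.succ_pos (by omega) h₁ h₂,
      isNC_joinZero k.succ_pos h₁ hnc₁ h₂ hnc₂⟩
  · intro P hP
    simpa only [Nat.sub_add_cancel nextOfZero_pos] using ncPartitions_decompose hP
  · rintro ⟨k, P₁, P₂⟩ hq
    simp only [mem_sigma, mem_range, mem_product, mem_ncPartitions] at hq
    obtain ⟨hk, ⟨h₁, -⟩, h₂, -⟩ := hq
    simp only [nextOfZero_joinZero k.succ_pos (by omega) h₁ h₂, restrict_joinZero_Ioo h₁ h₂,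
      restrict_joinZero_Icc k.succ_pos h₁ h₂, Nat.succ_sub_one]

lemma card_ncPartitions_range (n : ℕ) : #(ncPartitions (range n)) = catalan n := by
  induction n using Nat.strong_induction_on with
  | _ n ih =>
    rcases n with _ | n
    · simp [ncPartitions_empty]
    rw [card_ncPartitions_range_add_one, catalan_succ,
      Fin.sum_univ_eq_sum_range (fun i => catalan i * catalan (n - i))]
    refine sum_congr rfl fun k hk => ?_
    have hk := mem_range.1 hk
    rw [card_ncPartitions_eq_range (Ioo _ _), card_ncPartitions_eq_range (Icc _ _), Nat.card_Ioo,
      Nat.card_Icc, show k + 1 - 0 - 1 = k by omega, show n + 1 - (k + 1) = n - k by omega,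
      ih k (by omega), ih (n - k) (by omega)]

end Nat

theorem card_ncPartitions {α : Type*} [LinearOrder α] (s : Finset α) :
    #(ncPartitions s) = catalan #s := by
  rw [card_ncPartitions_eq_range, card_ncPartitions_range]

theorem card_ncMatchings {α : Type*} [LinearOrder α] {n : ℕ} (s : Finset α) (hs : #s = 2 * n) :
    #(ncMatchings s) = catalan n := by
  rw [card_ncMatchings_eq_range, hs, card_ncMatchings_range]

end NonCrossing

/-- Temperley–Lieb diagrams with `n` strands — i.e. non-crossing perfect
matchings of `2n` boundary points — are in bijection with non-crossing partitions of
`{1,...,n}` (the partition into black regions); in particular the number of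
non-crossing partitions of `{1,...,n}` is the `n`-th Catalan number. -/
theorem stmt_5 (n : ℕ) :
    Nonempty
      ({M : Finpartition (Finset.univ : Finset (Fin (2 * n))) //
          IsNC M.parts ∧ ∀ B ∈ M.parts, B.card = 2} ≃
        {π : Finpartition (Finset.univ : Finset (Fin n)) // IsNC π.parts}) ∧
    Fintype.card {π : Finpartition (Finset.univ : Finset (Fin n)) // IsNC π.parts}
      = catalan n := by
  have hπ : Fintype.card {π : Finpartition (Finset.univ : Finset (Fin n)) // IsNC π.parts}
      = catalan n := by
    rw [NonCrossing.card_finpartition_subtype, ← NonCrossing.ncPartitions,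
      NonCrossing.card_ncPartitions, Finset.card_univ, Fintype.card_fin]
  have hM : Fintype.card {M : Finpartition (Finset.univ : Finset (Fin (2 * n))) //
      IsNC M.parts ∧ ∀ B ∈ M.parts, B.card = 2} = catalan n := by
    rw [NonCrossing.card_finpartition_subtype _ fun P => IsNC P ∧ ∀ B ∈ P, B.card = 2,
      ← NonCrossing.card_ncMatchings (Finset.univ : Finset (Fin (2 * n))) (by simp),
      NonCrossing.ncMatchings, NonCrossing.ncPartitions, Finset.filter_filter]
    congr!
  exact ⟨Fintype.card_eq.mp (hM.trans hπ.symm), hπ⟩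
end

section
/- Let π be a non-crossing partition of {1,...,n} and let L(π) be the closed diagram obtained by placing the Temperley–Lieb diagram TL(π) corresponding to π in a disc and connecting all its n through-points by a single enclosing string. Then the number N(π) of closed loops in L(π) satisfies N(π) − 2 = n − |π|, where |π| is the number of classes of π. -/
/-!
Following a strand of `L(π)` is the permutation `loopMap π`: the successor within the class,
then the rotation back by one; its orbits are the loops other than the enclosing string. If
`p < y` are consecutive in a class and everything strictly between them is a singleton (such a
pair exists in every non-crossing partition that is not discrete), then splitting `y` off into a
singleton class turns `loopMap π` into `loopMap π ∘ swap p y`. The orbit of `p` is the interval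
`[p, y)`, which misses `y`, so the transposition merges two orbits: splitting raises `|π|` by one
and lowers `N(π)` by one. Induction on `n - |π|` ends at the discrete partition, where
`loopMap` is the rotation `i ↦ i - 1`, a single orbit, and `N = 2`.
-/

open scoped Classical

/-- The cyclically next element of the class of `i` in the partition `π`:
the smallest element of the class larger than `i`, or its minimum if `i` is
its largest element.  In the Temperley–Lieb diagram `TL(π)` this describes the
strand leaving the right side of point `i`. -/
noncomputable def nextInBlock {n : ℕ} (π : Finpartition (Finset.univ : Finset (Fin n)))
    (i : Fin n) : Fin n :=
  if h : ((π.part i).filter (fun j => i < j)).Nonempty then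
    ((π.part i).filter (fun j => i < j)).min' h
  else if h2 : (π.part i).Nonempty then (π.part i).min' h2
  else i

/-- Following a strand of the closed diagram `L(π)` from (the right side of) point `i`
to the next point it visits: the arc of `TL(π)` followed by the closure arc of `L(π)`
connecting consecutive points cyclically. -/
noncomputable def loopMap {n : ℕ} (π : Finpartition (Finset.univ : Finset (Fin n)))
    (i : Fin n) : Fin n :=
  ⟨((nextInBlock π i).val + n - 1) % n, Nat.mod_lt _ i.pos⟩

/-- The number of loops `N(π)` of the closed diagram `L(π)`: the number of connected
components of the strands of the closure of `TL(π)` (equivalence classes of points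
under the loop-following map, counted by their minimal representatives) plus one for
the enclosing string. -/
noncomputable def numLoops {n : ℕ} (π : Finpartition (Finset.univ : Finset (Fin n))) : ℕ :=
  (Finset.univ.filter fun i : Fin n =>
      ∀ j, Relation.EqvGen (fun a b => loopMap π a = b) i j → i ≤ j).card + 1


open Finset Function

namespace Finset

variable {α : Type*} [LinearOrder α] {B : Finset α} {i j y : α}

noncomputable def cyclicSucc (B : Finset α) (i : α) : α :=
  if h : (B.filter (fun j => i < j)).Nonempty then (B.filter (fun j => i < j)).min' h
  else if h₂ : B.Nonempty then B.min' h₂ else i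

theorem cyclicSucc_mem_of_lt (hj : j ∈ B) (hij : i < j) : B.cyclicSucc i ∈ B := by
  have h : (B.filter (fun j => i < j)).Nonempty := ⟨j, mem_filter.2 ⟨hj, hij⟩⟩
  rw [cyclicSucc, dif_pos h]
  exact (mem_filter.1 (min'_mem _ h)).1

theorem lt_cyclicSucc (hj : j ∈ B) (hij : i < j) : i < B.cyclicSucc i := by
  have h : (B.filter (fun j => i < j)).Nonempty := ⟨j, mem_filter.2 ⟨hj, hij⟩⟩
  rw [cyclicSucc, dif_pos h]
  exact (mem_filter.1 (min'_mem _ h)).2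

theorem cyclicSucc_le (hj : j ∈ B) (hij : i < j) : B.cyclicSucc i ≤ j := by
  have h : (B.filter (fun j => i < j)).Nonempty := ⟨j, mem_filter.2 ⟨hj, hij⟩⟩
  rw [cyclicSucc, dif_pos h]
  exact min'_le _ _ (mem_filter.2 ⟨hj, hij⟩)

theorem cyclicSucc_of_forall_le (hB : B.Nonempty) (h : ∀ j ∈ B, j ≤ i) :
    B.cyclicSucc i = B.min' hB := by
  have hempty : ¬(B.filter (fun j => i < j)).Nonempty := fun ⟨j, hj⟩ =>
    (mem_filter.1 hj).2.not_ge (h j (mem_filter.1 hj).1)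
  rw [cyclicSucc, dif_neg hempty, dif_pos hB]

theorem cyclicSucc_mem (hi : i ∈ B) : B.cyclicSucc i ∈ B := by
  by_cases h : ∃ j ∈ B, i < j
  · obtain ⟨j, hj, hij⟩ := h
    exact cyclicSucc_mem_of_lt hj hij
  · push Not at h
    rw [cyclicSucc_of_forall_le ⟨i, hi⟩ h]
    exact min'_mem _ _

theorem cyclicSucc_eq_of_lt (hij : i < j) (hj : j ∈ B) (hmin : ∀ k ∈ B, i < k → j ≤ k) :
    B.cyclicSucc i = j :=
  le_antisymm (cyclicSucc_le hj hij) (hmin _ (cyclicSucc_mem_of_lt hj hij) (lt_cyclicSucc hj hij))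

theorem cyclicSucc_singleton (i : α) : ({i} : Finset α).cyclicSucc i = i := by
  rw [cyclicSucc_of_forall_le (singleton_nonempty i) (fun j hj => (mem_singleton.1 hj).le),
    min'_singleton]

theorem injOn_cyclicSucc : Set.InjOn B.cyclicSucc B := by
  intro a ha b hb hab
  by_contra hne
  wlog hlt : a < b generalizing a b
  · exact this hb ha hab.symm (Ne.symm hne) (lt_of_le_of_ne (not_lt.1 hlt) (Ne.symm hne))
  by_cases h : ∃ j ∈ B, b < j
  · obtain ⟨j, hj, hbj⟩ := h
    exact (lt_cyclicSucc hj hbj).not_ge (hab ▸ cyclicSucc_le hb hlt)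
  · push Not at h
    rw [cyclicSucc_of_forall_le ⟨b, hb⟩ h] at hab
    exact (min'_le B a ha).not_gt (hab ▸ lt_cyclicSucc hb hlt)

theorem min'_erase_of_ne (hB : B.Nonempty) (h : B.min' hB ≠ y) :
    (B.erase y).min' ⟨_, mem_erase.2 ⟨h, min'_mem B hB⟩⟩ = B.min' hB :=
  le_antisymm (min'_le _ _ (mem_erase.2 ⟨h, min'_mem B hB⟩)) (min'_subset _ (erase_subset y B))

theorem cyclicSucc_erase_of_ne (h : B.cyclicSucc i ≠ y) :
    (B.erase y).cyclicSucc i = B.cyclicSucc i := by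
  by_cases hlt : ∃ j ∈ B, i < j
  · obtain ⟨j, hj, hij⟩ := hlt
    exact cyclicSucc_eq_of_lt (lt_cyclicSucc hj hij)
      (mem_erase.2 ⟨h, cyclicSucc_mem_of_lt hj hij⟩)
      fun k hk hik => cyclicSucc_le (mem_of_mem_erase hk) hik
  push Not at hlt
  rcases B.eq_empty_or_nonempty with rfl | hB
  · simp [cyclicSucc]
  rw [cyclicSucc_of_forall_le hB hlt] at h ⊢
  rw [cyclicSucc_of_forall_le ⟨_, mem_erase.2 ⟨h, min'_mem B hB⟩⟩
    fun k hk => hlt k (mem_of_mem_erase hk), min'_erase_of_ne hB h]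

theorem cyclicSucc_erase_of_eq (hi : i ∈ B) (hiy : i < y) (hy : y ∈ B)
    (hmin : ∀ k ∈ B, i < k → y ≤ k) : (B.erase y).cyclicSucc i = B.cyclicSucc y := by
  by_cases hlt : ∃ j ∈ B, y < j
  · obtain ⟨j, hj, hyj⟩ := hlt
    have hys := lt_cyclicSucc hj hyj
    refine cyclicSucc_eq_of_lt (hiy.trans hys)
      (mem_erase.2 ⟨hys.ne', cyclicSucc_mem_of_lt hj hyj⟩)
      fun k hk hik => cyclicSucc_le (mem_of_mem_erase hk) ?_
    exact lt_of_le_of_ne (hmin k (mem_of_mem_erase hk) hik) (ne_of_mem_erase hk).symm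
  push Not at hlt
  have hne : B.min' ⟨i, hi⟩ ≠ y := ((min'_le B i hi).trans_lt hiy).ne
  have hle : ∀ k ∈ B.erase y, k ≤ i := fun k hk => not_lt.1 fun hik =>
    have hkB := mem_of_mem_erase hk
    ne_of_mem_erase hk (le_antisymm (hlt k hkB) (hmin k hkB hik))
  rw [cyclicSucc_of_forall_le ⟨y, hy⟩ hlt,
    cyclicSucc_of_forall_le ⟨_, mem_erase.2 ⟨hne, min'_mem B _⟩⟩ hle,
    min'_erase_of_ne _ hne]

end Finset

namespace Finpartition

section

variable {α : Type*} [Fintype α] [DecidableEq α] {P : Finpartition (univ : Finset α)}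
  {a b y : α}

theorem mem_part_comm : a ∈ P.part b ↔ b ∈ P.part a := by
  rw [P.mem_part_iff_part_eq_part (mem_univ a) (mem_univ b),
    P.mem_part_iff_part_eq_part (mem_univ b) (mem_univ a), eq_comm]

def splitOff (P : Finpartition (univ : Finset α)) (y : α) : Finpartition (univ : Finset α) :=
  (P.avoid {y}).extend (singleton_ne_empty y) sdiff_disjoint (sdiff_union_of_subset (subset_univ _))

theorem part_splitOff_self : (P.splitOff y).part y = {y} :=
  (P.splitOff y).part_eq_of_mem (mem_insert_self _ _) (mem_singleton_self y)

theorem part_splitOff_of_ne (h : a ≠ y) : (P.splitOff y).part a = (P.part a).erase y := by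
  refine (P.splitOff y).part_eq_of_mem (mem_insert_of_mem (P.mem_avoid.2
    ⟨P.part a, P.part_mem.2 (mem_univ a), fun hle => h ?_, sdiff_singleton_eq_erase y _⟩))
    (mem_erase.2 ⟨h, P.mem_part (mem_univ a)⟩)
  exact mem_singleton.1 (hle (P.mem_part (mem_univ a)))

theorem card_parts_splitOff (ha : a ∈ P.part y) (hay : a ≠ y) :
    #(P.splitOff y).parts = #P.parts + 1 := by
  rw [splitOff, card_extend]
  congr 1
  have hsdiff : ∀ d ∈ P.parts, (d \ {y}).Nonempty := by
    intro d hd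
    by_cases hyd : y ∈ d
    · rw [← P.part_eq_of_mem hd hyd]
      exact ⟨a, mem_sdiff.2 ⟨ha, by simpa using hay⟩⟩
    · rw [sdiff_singleton_eq_erase, erase_eq_of_notMem hyd]
      exact P.nonempty_of_mem_parts hd
  symm
  refine card_bij (fun d _ => d \ {y}) (fun d hd => P.mem_avoid.2 ⟨d, hd, ?_, rfl⟩) ?_ ?_
  · intro hle
    exact (hsdiff d hd).ne_empty (sdiff_eq_empty_iff_subset.2 hle)
  · intro d hd e he hde
    obtain ⟨x, hx⟩ := hsdiff d hd
    exact P.eq_of_mem_parts hd he (mem_sdiff.1 hx).1 (mem_sdiff.1 (hde ▸ hx)).1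
  · intro c hc
    obtain ⟨d, hd, -, rfl⟩ := P.mem_avoid.1 hc
    exact ⟨d, hd, rfl⟩

theorem card_parts_of_forall_part_eq_singleton (h : ∀ a, P.part a = {a}) :
    #P.parts = Fintype.card α := by
  rw [← card_univ, ← P.sum_card_parts, card_eq_sum_ones]
  refine sum_congr rfl fun t ht => ?_
  obtain ⟨a, ha⟩ := P.nonempty_of_mem_parts ht
  rw [← P.part_eq_of_mem ht ha, h, card_singleton]

end

variable {α : Type*} [LinearOrder α] [Fintype α] [DecidableEq α]
  {P : Finpartition (univ : Finset α)}
  {y : α}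

theorem isNC_parts_iff : IsNC P.parts ↔ ∀ i j k l : α, i < k → k < j → j < l →
    j ∈ P.part i → l ∈ P.part k → k ∈ P.part i := by
  have hmem (a : α) : a ∈ P.part a := P.mem_part (mem_univ a)
  have hpart (a : α) : P.part a ∈ P.parts := P.part_mem.2 (mem_univ a)
  refine ⟨fun hP i j k l hik hkj hjl hj hl => ?_,
    fun h i j k l hik hkj hjl B hB C hC hBC hi hj hk hl => ?_⟩
  · by_contra hk
    exact hP i j k l hik hkj hjl _ (hpart i) _ (hpart k) (fun e => hk (e ▸ hmem k)) (hmem i) hj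
      (hmem k) hl
  · rw [← P.part_eq_of_mem hB hi] at hj hBC
    rw [← P.part_eq_of_mem hC hk] at hl hBC
    exact hBC (P.part_eq_of_mem (hpart i) (h i j k l hik hkj hjl hj hl)).symm

theorem isNC_splitOff (hP : IsNC P.parts) : IsNC (P.splitOff y).parts := by
  have hsplit {u v : α} (huv : u < v) (hv : v ∈ (P.splitOff y).part u) :
      u ≠ y ∧ v ∈ P.part u := by
    obtain rfl | huy := eq_or_ne u y
    · rw [part_splitOff_self, mem_singleton] at hv
      exact absurd hv huv.ne'
    rw [part_splitOff_of_ne huy, mem_erase] at hv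
    exact ⟨huy, hv.2⟩
  rw [isNC_parts_iff] at hP ⊢
  intro i j k l hik hkj hjl hj hl
  obtain ⟨hiy, hj⟩ := hsplit (hik.trans hkj) hj
  obtain ⟨hky, hl⟩ := hsplit (hkj.trans hjl) hl
  rw [part_splitOff_of_ne hiy]
  exact mem_erase.2 ⟨hky, hP i j k l hik hkj hjl hj hl⟩

structure IsInnermostArc (P : Finpartition (univ : Finset α)) (p y : α) : Prop where
  lt : p < y
  mem_part : p ∈ P.part y
  part_eq_singleton : ∀ z, p < z → z < y → P.part z = {z}

theorem IsInnermostArc.le_of_mem_part {p y k : α} (h : P.IsInnermostArc p y) (hk : k ∈ P.part y)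
    (hpk : p < k) : y ≤ k := by
  by_contra! hky
  have hyk := mem_part_comm.1 hk
  rw [h.part_eq_singleton k hpk hky, mem_singleton] at hyk
  exact hky.ne' hyk

/-- Take `y` least among the elements having a smaller element in their class, and `p` the
largest such element; a class meeting `(p, y)` in `z` and containing `w ≠ z` would either
contradict the choice of `y` or, if `y < w`, cross the class of `y`. -/
theorem exists_isInnermostArc (hP : IsNC P.parts) (h : ∃ a, P.part a ≠ {a}) :
    ∃ p y, P.IsInnermostArc p y := by
  have hmem (a : α) : a ∈ P.part a := P.mem_part (mem_univ a)
  obtain ⟨a, ha⟩ := h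
  obtain ⟨b, hb, hba⟩ : ∃ b ∈ P.part a, b ≠ a := by
    by_contra! hall
    exact ha (eq_singleton_iff_unique_mem.2 ⟨hmem a, hall⟩)
  set S := univ.filter fun y => ∃ q ∈ P.part y, q < y
  have hS : S.Nonempty := by
    rcases lt_or_gt_of_ne hba with hlt | hlt
    · exact ⟨a, mem_filter.2 ⟨mem_univ a, b, hb, hlt⟩⟩
    · exact ⟨b, mem_filter.2 ⟨mem_univ b, a, mem_part_comm.1 hb, hlt⟩⟩
  set y := S.min' hS
  have hmin : ∀ z w, w ∈ P.part z → w < z → y ≤ z := fun z w hw hwz =>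
    S.min'_le z (mem_filter.2 ⟨mem_univ z, w, hw, hwz⟩)
  obtain ⟨q, hq, hqy⟩ := (mem_filter.1 (S.min'_mem hS)).2
  set T := (P.part y).filter (· < y)
  have hT : T.Nonempty := ⟨q, mem_filter.2 ⟨hq, hqy⟩⟩
  obtain ⟨hp, hpy⟩ := mem_filter.1 (T.max'_mem hT)
  have hmax : ∀ z ∈ P.part y, z < y → z ≤ T.max' hT := fun z hz hzy =>
    T.le_max' z (mem_filter.2 ⟨hz, hzy⟩)
  refine ⟨T.max' hT, y, ⟨hpy, hp, fun z hpz hzy => ?_⟩⟩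
  refine eq_singleton_iff_unique_mem.2 ⟨hmem z, fun w hw => ?_⟩
  by_contra hwz
  have hzy' : z ∉ P.part y := fun hz => (hmax z hz hzy).not_gt hpz
  rcases lt_or_gt_of_ne hwz with hwz | hzw
  · exact (hmin z w hw hwz).not_gt hzy
  rcases (hmin w z (mem_part_comm.1 hw) hzw).lt_or_eq with hyw | hyw
  · have hz := isNC_parts_iff.1 hP _ _ _ _ hpz hzy hyw (mem_part_comm.1 hp) hw
    rw [P.part_eq_of_mem (P.part_mem.2 (mem_univ y)) hp] at hz
    exact hzy' hz
  · exact hzy' (mem_part_comm.1 (hyw ▸ hw))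

end Finpartition

namespace Relation.EqvGen

variable {α : Type*} {r : α → α → Prop}

theorem not_of_mapsTo [Finite α] {f : α → α} (hf : Injective f) {s : Set α}
    (hs : Set.MapsTo f s s) {a b : α} (ha : a ∈ s) (hb : b ∉ s) :
    ¬EqvGen (fun u v => f u = v) a b := by
  have hpre (u : α) : f u ∈ s ↔ u ∈ s := by
    refine ⟨fun hu => ?_, fun hu => hs hu⟩
    obtain ⟨v, hv, hvu⟩ := ((s.toFinite.injOn_iff_bijOn_of_mapsTo hs).1 hf.injOn).surjOn hu
    exact hf hvu ▸ hv
  intro hab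
  suffices ∀ u v, EqvGen (fun u v => f u = v) u v → (u ∈ s ↔ v ∈ s) from
    hb ((this a b hab).1 ha)
  intro u v huv
  induction huv with
  | rel u v h => exact h ▸ (hpre u).symm
  | refl => rfl
  | symm _ _ _ ih => exact ih.symm
  | trans _ _ _ _ _ ih₁ ih₂ => exact ih₁.trans ih₂

theorem card_filter_forall_le_eq_card_quot [Fintype α] [LinearOrder α] (r : α → α → Prop)
    [DecidablePred fun i => ∀ j, EqvGen r i j → i ≤ j] :
    #{i | ∀ j, EqvGen r i j → i ≤ j} = Nat.card (Quot r) := by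
  rw [← Nat.card_eq_finsetCard]
  refine Nat.card_congr (Equiv.ofBijective (fun i => Quot.mk r i.1) ⟨?_, ?_⟩)
  · rintro ⟨i, hi⟩ ⟨j, hj⟩ hij
    have hij : EqvGen r i j := Quot.eqvGen_exact hij
    exact Subtype.ext (le_antisymm ((mem_filter.1 hi).2 j hij) ((mem_filter.1 hj).2 i hij.symm))
  · rintro ⟨a⟩
    obtain ⟨m, hm, hmin⟩ := (univ.filter (EqvGen r a)).exists_min_image id
      ⟨a, mem_filter.2 ⟨mem_univ a, .refl a⟩⟩
    have ham : EqvGen r a m := (mem_filter.1 hm).2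
    refine ⟨⟨m, mem_filter.2 ⟨mem_univ m, fun j hj => ?_⟩⟩, Quot.eqvGen_sound ham.symm⟩
    exact hmin j (mem_filter.2 ⟨mem_univ j, ham.trans _ _ _ hj⟩)

theorem card_quot_congr {s : α → α → Prop} (h : ∀ a b, EqvGen r a b ↔ EqvGen s a b) :
    Nat.card (Quot r) = Nat.card (Quot s) :=
  Nat.card_congr
    { toFun := Quot.lift (Quot.mk s) fun a b hab => Quot.eqvGen_sound ((h a b).1 (.rel a b hab))
      invFun := Quot.lift (Quot.mk r) fun a b hab => Quot.eqvGen_sound ((h a b).2 (.rel a b hab))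
      left_inv := by rintro ⟨a⟩; rfl
      right_inv := by rintro ⟨a⟩; rfl }

/-- Sending the class of `y` to that of `p` retracts the classes of the enlarged relation onto
all classes of `r` but that of `y`. -/
theorem card_quot_eq_card_quot_sup_edge_add_one [Finite α] {p y : α} (hpy : ¬EqvGen r p y) :
    Nat.card (Quot r) = Nat.card (Quot fun a b => r a b ∨ a = p ∧ b = y) + 1 := by
  let r' a b := r a b ∨ a = p ∧ b = y
  have hpy' : EqvGen r' p y := .rel _ _ (Or.inr ⟨rfl, rfl⟩)
  let g (c : α) : Quot r := if EqvGen r c y then Quot.mk r p else Quot.mk r c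
  have hg (c : α) (hc : ¬EqvGen r c y) : g c = Quot.mk r c := if_neg hc
  have hg_rel : ∀ a b, r' a b → g a = g b := by
    rintro a b (hab | ⟨rfl, rfl⟩)
    · have hab : EqvGen r a b := .rel a b hab
      by_cases ha : EqvGen r a y
      · simp only [g, if_pos ha, if_pos (hab.symm.trans _ _ _ ha)]
      · rw [hg a ha, hg b fun hb => ha (hab.trans _ _ _ hb)]
        exact Quot.eqvGen_sound hab
    · simp only [g, if_neg hpy, if_pos (EqvGen.refl _)]
  let ψ : Quot r' → Quot r := Quot.lift g hg_rel
  let φ : Quot r → Quot r' := Quot.map id fun a b h => Or.inl h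
  have hψ : LeftInverse φ ψ := by
    rintro ⟨c⟩
    change φ (g c) = Quot.mk r' c
    by_cases hc : EqvGen r c y
    · rw [show g c = Quot.mk r p from if_pos hc]
      exact Quot.eqvGen_sound (hpy'.trans _ _ _ (EqvGen.mono (fun a b h => Or.inl h) _ _ hc.symm))
    · rw [hg c hc]
      rfl
  have hrange : Set.range ψ = {Quot.mk r y}ᶜ := by
    refine (Set.range_subset_iff.2 fun x => ?_).antisymm fun x hx => ?_
    · induction x using Quot.ind with | _ c => ?_
      change g c ≠ Quot.mk r y
      by_cases hc : EqvGen r c y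
      · rw [show g c = Quot.mk r p from if_pos hc]
        exact fun e => hpy (Quot.eqvGen_exact e)
      · rw [hg c hc]
        exact fun e => hc (Quot.eqvGen_exact e)
    · induction x using Quot.ind with | _ c => ?_
      exact ⟨Quot.mk r' c, hg c fun hc => hx (Quot.eqvGen_sound hc)⟩
  rw [← Set.ncard_add_ncard_compl (Set.range ψ), Set.ncard_range_of_injective hψ.injective, hrange,
    compl_compl, Set.ncard_singleton]

theorem swap_apply [DecidableEq α] {p y : α} (h : EqvGen r p y) (u : α) :
    EqvGen r u (Equiv.swap p y u) := by
  rcases eq_or_ne u p with rfl | hup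
  · rwa [Equiv.swap_apply_left]
  rcases eq_or_ne u y with rfl | huy
  · rw [Equiv.swap_apply_right]
    exact h.symm
  rw [Equiv.swap_apply_of_ne_of_ne hup huy]
  exact .refl u

theorem comp_swap_iff [DecidableEq α] {f : α → α} {p y : α}
    (h : EqvGen (fun u v => (f ∘ Equiv.swap p y) u = v) p y) (a b : α) :
    EqvGen (fun u v => (f ∘ Equiv.swap p y) u = v) a b ↔
      EqvGen (fun u v => f u = v ∨ u = p ∧ v = y) a b := by
  refine ⟨fun hab => eqvGen_le (fun u v huv => ?_) a b hab,
    fun hab => eqvGen_le (fun u v huv => ?_) a b hab⟩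
  · have hpy : EqvGen (fun u v => f u = v ∨ u = p ∧ v = y) p y :=
      .rel _ _ (Or.inr ⟨rfl, rfl⟩)
    exact (hpy.swap_apply u).trans _ _ _ (.rel _ _ (Or.inl huv))
  · rcases huv with rfl | ⟨rfl, rfl⟩
    · exact (h.swap_apply u).trans _ _ _ (.rel _ _ (by simp))
    · exact h

end Relation.EqvGen

theorem Fin.eqvGen_of_forall_val_add_one_eq {n : ℕ} {g : Fin n → Fin n} {a b : Fin n}
    (hab : a ≤ b) (h : ∀ z, a < z → z ≤ b → (g z).val + 1 = z.val) :
    Relation.EqvGen (fun u v => g u = v) b a := by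
  obtain ⟨d, hd⟩ := Nat.exists_eq_add_of_le (Fin.le_def.1 hab)
  induction d generalizing b with
  | zero =>
    obtain rfl : b = a := Fin.ext (by omega)
    exact .refl b
  | succ d ih =>
    have hb := h b (Fin.lt_def.2 (by omega)) le_rfl
    have hgb : g b ≤ b := Fin.le_def.2 (by omega)
    exact (Relation.EqvGen.rel (r := fun u v => g u = v) b _ rfl).trans _ _ _
      (ih (Fin.le_def.2 (by omega)) (fun z hz hzb => h z hz (hzb.trans hgb)) (by omega))

section

variable {n : ℕ} {π : Finpartition (univ : Finset (Fin n))} {i : Fin n}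

theorem nextInBlock_eq_cyclicSucc (i : Fin n) : nextInBlock π i = (π.part i).cyclicSucc i := rfl

theorem loopMap_eq_finRotate_symm (i : Fin n) :
    loopMap π i = (finRotate n).symm (nextInBlock π i) := by
  have := i.neZero
  rw [finRotate_symm_apply]
  apply Fin.ext
  rw [loopMap, Fin.sub_def]
  simp only [Fin.val_one']
  rcases Nat.lt_or_ge 1 n with hn | hn
  · rw [Nat.mod_eq_of_lt hn]
    congr 1
    omega
  · obtain rfl : n = 1 := by have := i.pos; omega
    simp

theorem nextInBlock_mem_part (i : Fin n) : nextInBlock π i ∈ π.part i :=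
  cyclicSucc_mem (π.mem_part (mem_univ i))

theorem nextInBlock_injective : Injective (nextInBlock π) := by
  intro a b hab
  have hpart (c : Fin n) : π.part (nextInBlock π c) = π.part c :=
    π.part_eq_of_mem (π.part_mem.2 (mem_univ c)) (nextInBlock_mem_part c)
  have hab' : π.part a = π.part b := by rw [← hpart a, hab, hpart b]
  rw [nextInBlock_eq_cyclicSucc, nextInBlock_eq_cyclicSucc, hab'] at hab
  exact injOn_cyclicSucc (hab' ▸ π.mem_part (mem_univ a)) (π.mem_part (mem_univ b)) hab

theorem nextInBlock_of_part_eq_singleton (h : π.part i = {i}) : nextInBlock π i = i := by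
  rw [nextInBlock_eq_cyclicSucc, h, cyclicSucc_singleton]

theorem loopMap_injective : Injective (loopMap π) := fun a b hab =>
  nextInBlock_injective ((finRotate n).symm.injective (by rwa [← loopMap_eq_finRotate_symm,
    ← loopMap_eq_finRotate_symm]))

theorem val_loopMap_add_one (h : 0 < (nextInBlock π i).val) :
    (loopMap π i).val + 1 = (nextInBlock π i).val := by
  have := i.neZero
  rw [loopMap_eq_finRotate_symm, coe_finRotate_symm_of_ne_zero (Fin.val_ne_zero_iff.1 h.ne')]
  omega

theorem numLoops_eq_card_quot (π : Finpartition (univ : Finset (Fin n))) :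
    numLoops π = Nat.card (Quot fun a b => loopMap π a = b) + 1 := by
  rw [numLoops, Relation.EqvGen.card_filter_forall_le_eq_card_quot]

theorem numLoops_of_forall_part_eq_singleton (hn : n ≠ 0) (h : ∀ i, π.part i = {i}) :
    numLoops π = 2 := by
  have : NeZero n := ⟨hn⟩
  have hrel (i : Fin n) : Relation.EqvGen (fun a b => loopMap π a = b) i 0 :=
    Fin.eqvGen_of_forall_val_add_one_eq (Fin.zero_le i) fun z hz _ => by
      rw [val_loopMap_add_one] <;> rw [nextInBlock_of_part_eq_singleton (h z)]
      exact hz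
  rw [numLoops_eq_card_quot, Nat.card_eq_one_iff_unique.2 ⟨⟨?_⟩, ⟨Quot.mk _ 0⟩⟩]
  rintro ⟨a⟩ ⟨b⟩
  exact Quot.eqvGen_sound ((hrel a).trans _ _ _ (hrel b).symm)

namespace Finpartition.IsInnermostArc

variable {p y z : Fin n} (h : π.IsInnermostArc p y)
include h

theorem nextInBlock_left : nextInBlock π p = y := by
  rw [nextInBlock_eq_cyclicSucc, π.part_eq_of_mem (π.part_mem.2 (mem_univ y)) h.mem_part]
  exact cyclicSucc_eq_of_lt h.lt (π.mem_part (mem_univ y)) fun k hk hpk =>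
    h.le_of_mem_part hk hpk

theorem nextInBlock_splitOff : nextInBlock (π.splitOff y) = nextInBlock π ∘ Equiv.swap p y := by
  funext z
  rw [comp_apply]
  rcases eq_or_ne z y with rfl | hzy
  · rw [Equiv.swap_apply_right, h.nextInBlock_left, nextInBlock_eq_cyclicSucc, part_splitOff_self,
      cyclicSucc_singleton]
  rw [nextInBlock_eq_cyclicSucc, part_splitOff_of_ne hzy]
  rcases eq_or_ne z p with rfl | hzp
  · rw [Equiv.swap_apply_left, π.part_eq_of_mem (π.part_mem.2 (mem_univ y)) h.mem_part]
    exact cyclicSucc_erase_of_eq h.mem_part h.lt (π.mem_part (mem_univ y))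
      fun k hk hzk => h.le_of_mem_part hk hzk
  · rw [Equiv.swap_apply_of_ne_of_ne hzp hzy]
    exact cyclicSucc_erase_of_ne fun e =>
      hzp (nextInBlock_injective (e.trans h.nextInBlock_left.symm))

theorem loopMap_splitOff : loopMap (π.splitOff y) = loopMap π ∘ Equiv.swap p y := by
  funext z
  rw [comp_apply, loopMap_eq_finRotate_symm, loopMap_eq_finRotate_symm, h.nextInBlock_splitOff,
    comp_apply]

theorem val_loopMap_left : (loopMap π p).val + 1 = y.val := by
  rw [val_loopMap_add_one] <;> rw [h.nextInBlock_left]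
  exact (Nat.zero_le p.val).trans_lt h.lt

theorem val_loopMap_of_lt_of_lt (hpz : p < z) (hzy : z < y) : (loopMap π z).val + 1 = z.val := by
  rw [val_loopMap_add_one] <;> rw [nextInBlock_of_part_eq_singleton (h.part_eq_singleton z hpz hzy)]
  exact (Nat.zero_le p.val).trans_lt hpz

theorem not_eqvGen_loopMap : ¬Relation.EqvGen (fun a b => loopMap π a = b) p y := by
  refine Relation.EqvGen.not_of_mapsTo loopMap_injective (s := Set.Ico p y) ?_
    (Set.left_mem_Ico.2 h.lt) Set.right_notMem_Ico
  rintro z ⟨hpz, hzy⟩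
  rw [Set.mem_Ico, Fin.le_def, Fin.lt_def]
  rcases hpz.lt_or_eq with hpz | rfl
  · have := h.val_loopMap_of_lt_of_lt hpz hzy
    omega
  · have := h.val_loopMap_left
    omega

theorem eqvGen_loopMap_splitOff :
    Relation.EqvGen (fun a b => loopMap (π.splitOff y) a = b) p y := by
  refine (Fin.eqvGen_of_forall_val_add_one_eq h.lt.le fun z hpz hzy => ?_).symm
  rw [h.loopMap_splitOff, comp_apply]
  rcases hzy.lt_or_eq with hzy | rfl
  · rw [Equiv.swap_apply_of_ne_of_ne hpz.ne' hzy.ne]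
    exact h.val_loopMap_of_lt_of_lt hpz hzy
  · rw [Equiv.swap_apply_right]
    exact h.val_loopMap_left

theorem numLoops_eq_numLoops_splitOff_add_one : numLoops π = numLoops (π.splitOff y) + 1 := by
  have hsplit := h.eqvGen_loopMap_splitOff
  rw [h.loopMap_splitOff] at hsplit
  rw [numLoops_eq_card_quot, numLoops_eq_card_quot, h.loopMap_splitOff,
    Relation.EqvGen.card_quot_eq_card_quot_sup_edge_add_one h.not_eqvGen_loopMap,
    Relation.EqvGen.card_quot_congr (Relation.EqvGen.comp_swap_iff hsplit)]

end Finpartition.IsInnermostArc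

end

theorem numLoops_add_card_parts {n : ℕ} (hn : n ≠ 0) (π : Finpartition (univ : Finset (Fin n)))
    (hπ : IsNC π.parts) : numLoops π + #π.parts = n + 2 := by
  by_cases hsing : ∀ i, π.part i = {i}
  · rw [numLoops_of_forall_part_eq_singleton hn hsing,
      Finpartition.card_parts_of_forall_part_eq_singleton hsing, Fintype.card_fin, add_comm]
  push Not at hsing
  obtain ⟨p, y, harc⟩ := Finpartition.exists_isInnermostArc hπ hsing
  have hcard := Finpartition.card_parts_splitOff harc.mem_part harc.lt.ne
  have hle := (π.splitOff y).card_parts_le_card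
  have := numLoops_add_card_parts hn (π.splitOff y) (Finpartition.isNC_splitOff hπ)
  rw [harc.numLoops_eq_numLoops_splitOff_add_one]
  omega
termination_by n - #π.parts
decreasing_by
  rw [card_univ, Fintype.card_fin] at hle
  omega

/-- for a non-crossing partition `π` of `{1,...,n}`, the number of loops
of the closure `L(π)` of the Temperley–Lieb diagram `TL(π)` satisfies
`N(π) − 2 = n − |π|`, i.e. `N(π) = n − |π| + 2`. -/
theorem stmt_6 (n : ℕ) (hn : n ≠ 0) (π : Finpartition (Finset.univ : Finset (Fin n)))
    (hπ : IsNC π.parts) :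
    numLoops π = n - π.parts.card + 2 ∧ numLoops π - 2 = n - π.parts.card := by
  have h := numLoops_add_card_parts hn π hπ
  have hle := π.card_parts_le_card
  rw [card_univ, Fintype.card_fin] at hle
  omega
end

section
/- For real numbers δ > 1 and integers N ≥ 1, define the 'free dimension' arithmetic by the rules of Dykema: the free product of N copies of (ℂ ⊕ L𝔽_1) with weights (1−δ^{-1}, δ^{-1}), computed by iterating the two-case formula of Proposition 1.7 of Dykema, yields LF(N(2δ^{-1} − δ^{-2})) if N ≥ δ, and ℂ ⊕ LF(2 − 1/N) with weights (1 − Nδ^{-1}, Nδ^{-1}) if N ≤ δ. Formally: prove by induction on N that iterating the map ((1−α, r), (1−β, s)) ↦ LF(rα² + 2α(1−α) + sβ² + 2β(1−β)) if α+β ≥ 1, and (1−α−β) ⊕ LF((α+β)^{-2}(rα² + sβ² + 4αβ)) with weight α+β if α+β ≤ 1, starting from N copies of (α, r) = (δ^{-1}, 1), gives parameters N(2δ^{-1} − δ^{-2}) in the first case and (Nδ^{-1}, 2 − 1/N) in the second. -/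
/-- The one-step free-product combination rule of Dykema (Proposition 1.7):
a state `(w, r)` represents `ℂ ⊕ LF(r)` with weights `(1 − w, w)`
(with `w = 1` representing the factor `LF(r)` itself). -/
noncomputable def dykemaStep (p q : ℝ × ℝ) : ℝ × ℝ :=
  if 1 ≤ p.1 + q.1 then
    (1, p.2 * p.1 ^ 2 + 2 * p.1 * (1 - p.1) + q.2 * q.1 ^ 2 + 2 * q.1 * (1 - q.1))
  else
    (p.1 + q.1, (p.1 + q.1) ^ (-2 : ℤ) * (p.2 * p.1 ^ 2 + q.2 * q.1 ^ 2 + 4 * p.1 * q.1))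

/-- The `N`-fold iterated combination of copies of `(δ⁻¹, 1)`,
i.e. of `ℂ ⊕ L𝔽₁ = ℂ ⊕ Lℤ` with weights `(1 − δ⁻¹, δ⁻¹)`. -/
noncomputable def dykemaIter (δ : ℝ) : ℕ → ℝ × ℝ
  | 0 => (δ⁻¹, 1)
  | Nat.succ m => dykemaStep (dykemaIter δ m) (δ⁻¹, 1)

/-!
A state `(w, r)` is determined by its weight `w ≠ 0` and its free dimension
`r w² + 2 w (1 - w)` (Dykema's `fdim` of `ℂ ⊕ LF(r)` with weights `(1 - w, w)`).
Both cases of the combination rule add free dimensions, and the weights add until they are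
capped at `1`. After `N` copies of `(δ⁻¹, 1)` the weight is therefore `min 1 (N δ⁻¹)` and the
free dimension is `N (2 δ⁻¹ - δ⁻²)`, from which both formulas are read off.
-/

noncomputable def freeDim (p : ℝ × ℝ) : ℝ :=
  p.2 * p.1 ^ 2 + 2 * p.1 * (1 - p.1)

lemma freeDim_one (r : ℝ) : freeDim (1, r) = r := by
  simp [freeDim]

lemma freeDim_mk_one (w : ℝ) : freeDim (w, 1) = 2 * w - w ^ 2 := by
  simp only [freeDim]
  ring

lemma eq_of_fst_eq_of_freeDim_eq {p q : ℝ × ℝ} (hw : p.1 ≠ 0) (h₁ : p.1 = q.1)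
    (h₂ : freeDim p = freeDim q) : p = q := by
  refine Prod.ext h₁ ?_
  unfold freeDim at h₂
  rw [← h₁] at h₂
  exact mul_right_cancel₀ (pow_ne_zero 2 hw) (by linarith)

lemma dykemaStep_fst (p q : ℝ × ℝ) : (dykemaStep p q).1 = min 1 (p.1 + q.1) := by
  unfold dykemaStep
  split_ifs with h
  · exact (min_eq_left h).symm
  · exact (min_eq_right (not_le.mp h).le).symm

lemma freeDim_dykemaStep {p q : ℝ × ℝ} (h : p.1 + q.1 ≠ 0) :
    freeDim (dykemaStep p q) = freeDim p + freeDim q := by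
  unfold dykemaStep freeDim
  split_ifs
  · ring
  · simp only [zpow_neg, zpow_ofNat]
    field_simp
    ring

section Iter

variable {δ : ℝ}

lemma dykemaIter_fst_pos (hδ : 0 < δ) : ∀ m, 0 < (dykemaIter δ m).1
  | 0 => inv_pos.mpr hδ
  | m + 1 => by
    rw [dykemaIter, dykemaStep_fst]
    exact lt_min one_pos (add_pos (dykemaIter_fst_pos hδ m) (inv_pos.mpr hδ))

lemma dykemaIter_fst (hδ : 1 ≤ δ) (m : ℕ) :
    (dykemaIter δ m).1 = min 1 ((m + 1) * δ⁻¹) := by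
  induction m with
  | zero => simpa [dykemaIter] using inv_le_one_of_one_le₀ hδ
  | succ m ih =>
    rw [dykemaIter, dykemaStep_fst, ih, ← min_add_add_right, ← min_assoc,
      min_eq_left (le_add_of_nonneg_right (by positivity))]
    push_cast
    ring_nf

lemma freeDim_dykemaIter (hδ : 0 < δ) (m : ℕ) :
    freeDim (dykemaIter δ m) = (m + 1) * freeDim (δ⁻¹, 1) := by
  induction m with
  | zero => simp [dykemaIter]
  | succ m ih =>
    rw [dykemaIter, freeDim_dykemaStep
      (add_pos (dykemaIter_fst_pos hδ m) (inv_pos.mpr hδ)).ne', ih]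
    push_cast
    ring

end Iter

/-- `(ℂ ⊕ Lℤ)^{*N}` (with weights `(1 − δ⁻¹, δ⁻¹)`), computed by
iterating Dykema's two-case formula, is `LF(N(2δ⁻¹ − δ⁻²))` if `N ≥ δ`, and
`ℂ ⊕ LF(2 − 1/N)` with weights `(1 − Nδ⁻¹, Nδ⁻¹)` if `N ≤ δ`. -/
theorem stmt_14 (δ : ℝ) (hδ : 1 < δ) (N : ℕ) (hN : 1 ≤ N) :
    ((δ ≤ (N : ℝ)) → dykemaIter δ (N - 1) = (1, (N : ℝ) * (2 * δ⁻¹ - δ⁻¹ ^ 2))) ∧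
    (((N : ℝ) ≤ δ) → dykemaIter δ (N - 1) = ((N : ℝ) * δ⁻¹, 2 - 1 / (N : ℝ))) := by
  obtain ⟨m, rfl⟩ := Nat.exists_eq_add_of_le' hN
  have hδ₀ : 0 < δ := one_pos.trans hδ
  have hfst := dykemaIter_fst hδ.le m
  have hdim := freeDim_dykemaIter hδ₀ m
  rw [Nat.add_sub_cancel]
  push_cast
  constructor
  · intro hle
    rw [min_eq_left ((le_mul_inv_iff₀ hδ₀).mpr (by rwa [one_mul]))] at hfst
    refine eq_of_fst_eq_of_freeDim_eq (by simp [hfst]) hfst ?_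
    rw [hdim, freeDim_one, freeDim_mk_one]
  · intro hle
    rw [min_eq_right (mul_inv_le_one_of_le₀ hle hδ₀.le)] at hfst
    refine eq_of_fst_eq_of_freeDim_eq (hfst ▸ by positivity) hfst ?_
    rw [hdim, freeDim_mk_one, freeDim]
    field_simp
    ring
end

section
/- Let D and E be complementary subsets of {1,...,t}. For π ∈ NC(D), define π̃ ∈ the partition lattice of E as the coarsest partition ρ of E such that π ∪ ρ is a non-crossing partition of {1,...,t}. Then π̃ exists, is non-crossing, and the set of λ ∈ NC(t) in which no class meets both D and E is in bijection with pairs (π, ρ) where π ∈ NC(D) and ρ ∈ NC(E) with ρ ≤ π̃, via λ ↦ (λ|_D, λ|_E). -/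
open scoped Classical

namespace Stmt17

variable {t : ℕ}

lemma isNC_subset {P Q : Finset (Finset (Fin t))} (h : P ⊆ Q) (hQ : IsNC Q) : IsNC P :=
  fun i j k l h1 h2 h3 B hB C hC hne => hQ i j k l h1 h2 h3 B (h hB) C (h hC) hne

/-- `C` crosses the pair `{i, j}`. -/
def Cross (C : Finset (Fin t)) (i j : Fin t) : Prop :=
  (∃ k ∈ C, min i.val j.val < k.val ∧ k.val < max i.val j.val) ∧
  (∃ l ∈ C, l.val < min i.val j.val ∨ max i.val j.val < l.val)

lemma cross_comm {C : Finset (Fin t)} {i j : Fin t} : Cross C i j ↔ Cross C j i := by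
  unfold Cross; rw [Nat.min_comm, Nat.max_comm]

/-- "no crossing with any class of `P`" relation. -/
def NF (P : Finset (Finset (Fin t))) (i j : Fin t) : Prop := ∀ C ∈ P, ¬ Cross C i j

lemma nf_refl (P : Finset (Finset (Fin t))) (i : Fin t) : NF P i i := by
  intro C _ ⟨⟨k, _, hk⟩, _⟩; omega

lemma nf_symm {P : Finset (Finset (Fin t))} {i j : Fin t} (h : NF P i j) : NF P j i :=
  fun C hC hc => h C hC (cross_comm.mpr hc)

lemma val_ne_of_mem_not_mem {C : Finset (Fin t)} {x y : Fin t} (hx : x ∈ C) (hy : y ∉ C) :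
    x.val ≠ y.val := fun h => hy ((Fin.val_injective h) ▸ hx)

lemma cross_trans_single {C : Finset (Fin t)} {i j m : Fin t}
    (hi : i ∉ C) (hj : j ∉ C) (hm : m ∉ C)
    (h1 : ¬ Cross C i j) (h2 : ¬ Cross C j m) : ¬ Cross C i m := by
  rintro ⟨⟨k, hkC, hk⟩, ⟨l, hlC, hl⟩⟩
  rw [Cross, not_and_or] at h1 h2
  push_neg at h1 h2
  have hki := val_ne_of_mem_not_mem hkC hi
  have hkj := val_ne_of_mem_not_mem hkC hj
  have hkm := val_ne_of_mem_not_mem hkC hm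
  have hli := val_ne_of_mem_not_mem hlC hi
  have hlj := val_ne_of_mem_not_mem hlC hj
  have hlm := val_ne_of_mem_not_mem hlC hm
  rcases h1 with h1 | h1 <;> rcases h2 with h2 | h2 <;>
    have h1k := h1 k hkC <;> have h1l := h1 l hlC <;>
    have h2k := h2 k hkC <;> have h2l := h2 l hlC <;> omega

/-- the key step for non-crossingness of π̃. -/
lemma cross_step {C : Finset (Fin t)} {i j k l : Fin t}
    (hik : i < k) (hkj : k < j) (hjl : j < l)
    (hi : i ∉ C) (hj : j ∉ C) (hk : k ∉ C) (hl : l ∉ C)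
    (h1 : ¬ Cross C i j) (h2 : ¬ Cross C k l) : ¬ Cross C i k := by
  rintro ⟨⟨m, hmC, hm⟩, ⟨n, hnC, hn⟩⟩
  rw [Cross, not_and_or] at h1 h2
  push_neg at h1 h2
  have e1 := val_ne_of_mem_not_mem hmC hi
  have e2 := val_ne_of_mem_not_mem hmC hj
  have e3 := val_ne_of_mem_not_mem hmC hk
  have e4 := val_ne_of_mem_not_mem hmC hl
  have e5 := val_ne_of_mem_not_mem hnC hi
  have e6 := val_ne_of_mem_not_mem hnC hj
  have e7 := val_ne_of_mem_not_mem hnC hk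
  have e8 := val_ne_of_mem_not_mem hnC hl
  have hik' : i.val < k.val := hik
  have hkj' : k.val < j.val := hkj
  have hjl' : j.val < l.val := hjl
  rcases h1 with h1 | h1 <;> rcases h2 with h2 | h2 <;>
    have h1m := h1 m hmC <;> have h1n := h1 n hnC <;>
    have h2m := h2 m hmC <;> have h2n := h2 n hnC <;> omega

/-- Given NC `parts`, a part `C` does not cross a pair inside another part `B`. -/
lemma isNC_no_cross {parts : Finset (Finset (Fin t))} (h : IsNC parts)
    {B C : Finset (Fin t)} (hB : B ∈ parts) (hC : C ∈ parts) (hne : C ≠ B)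
    {i j : Fin t} (hi : i ∈ B) (hj : j ∈ B) : ¬ Cross C i j := by
  rintro ⟨⟨k, hkC, hk⟩, ⟨l, hlC, hl⟩⟩
  rcases le_total i.val j.val with hij | hij
  · rw [min_eq_left hij, max_eq_right hij] at hk hl
    rcases hl with hl | hl
    · exact h l k i j (by rw [Fin.lt_def]; omega) (by rw [Fin.lt_def]; omega)
        (by rw [Fin.lt_def]; omega) C hC B hB hne hlC hkC hi hj
    · exact h i j k l (by rw [Fin.lt_def]; omega) (by rw [Fin.lt_def]; omega)
        (by rw [Fin.lt_def]; omega) B hB C hC (Ne.symm hne) hi hj hkC hlC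
  · rw [min_eq_right hij, max_eq_left hij] at hk hl
    rcases hl with hl | hl
    · exact h l k j i (by rw [Fin.lt_def]; omega) (by rw [Fin.lt_def]; omega)
        (by rw [Fin.lt_def]; omega) C hC B hB hne hlC hkC hj hi
    · exact h j i k l (by rw [Fin.lt_def]; omega) (by rw [Fin.lt_def]; omega)
        (by rw [Fin.lt_def]; omega) B hB C hC (Ne.symm hne) hj hi hkC hlC

/-- the class of `i` in the partition π̃. -/
noncomputable def cls (P : Finset (Finset (Fin t))) (E : Finset (Fin t)) (i : Fin t) : Finset (Fin t) :=
  E.filter (fun j => NF P i j)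

lemma mem_cls {P : Finset (Finset (Fin t))} {E : Finset (Fin t)} {i j : Fin t} :
    j ∈ cls P E i ↔ j ∈ E ∧ NF P i j := Finset.mem_filter

lemma nf_trans {P : Finset (Finset (Fin t))} {E : Finset (Fin t)}
    (hPE : ∀ C ∈ P, ∀ x ∈ E, x ∉ C) {i j m : Fin t}
    (hi : i ∈ E) (hj : j ∈ E) (hm : m ∈ E)
    (h1 : NF P i j) (h2 : NF P j m) : NF P i m :=
  fun C hC => cross_trans_single (hPE C hC i hi) (hPE C hC j hj) (hPE C hC m hm)
    (h1 C hC) (h2 C hC)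

lemma cls_eq {P : Finset (Finset (Fin t))} {E : Finset (Fin t)}
    (hPE : ∀ C ∈ P, ∀ x ∈ E, x ∉ C) {i j : Fin t}
    (hi : i ∈ E) (hj : j ∈ E) (hij : NF P i j) : cls P E i = cls P E j := by
  ext y
  simp only [mem_cls]
  constructor
  · rintro ⟨hy, h⟩; exact ⟨hy, nf_trans hPE hj hi hy (nf_symm hij) h⟩
  · rintro ⟨hy, h⟩; exact ⟨hy, nf_trans hPE hi hj hy hij h⟩

/-- The partition π̃ of `E`. -/
noncomputable def tildeFP (P : Finset (Finset (Fin t))) (E : Finset (Fin t))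
    (hPE : ∀ C ∈ P, ∀ x ∈ E, x ∉ C) : Finpartition E where
  parts := E.image (cls P E)
  supIndep := by
    rw [Finset.supIndep_iff_pairwiseDisjoint]
    intro B hB C hC hne
    simp only [Finset.coe_image, Set.mem_image, Finset.mem_coe] at hB hC
    obtain ⟨i, hi, rfl⟩ := hB
    obtain ⟨j, hj, rfl⟩ := hC
    rw [Function.onFun, Finset.disjoint_left]
    intro x hx hx'
    simp only [id_eq] at hx hx'
    rw [mem_cls] at hx hx'
    exact hne (by rw [cls_eq hPE hi hx.1 hx.2, ← cls_eq hPE hj hx.1 hx'.2])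
  sup_parts := by
    apply le_antisymm
    · refine Finset.sup_le fun B hB => ?_
      obtain ⟨i, hi, rfl⟩ := Finset.mem_image.1 hB
      exact Finset.filter_subset _ _
    · intro x hx
      exact Finset.mem_sup.2 ⟨cls P E x, Finset.mem_image_of_mem _ hx,
        mem_cls.2 ⟨hx, nf_refl P x⟩⟩
  bot_notMem := by
    intro h
    obtain ⟨i, hi, h0⟩ := Finset.mem_image.1 h
    have hmem : i ∈ cls P E i := mem_cls.2 ⟨hi, nf_refl P i⟩
    rw [h0] at hmem
    exact absurd hmem (Finset.notMem_empty i)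

lemma nf_of_mem_tilde {P : Finset (Finset (Fin t))} {E : Finset (Fin t)}
    {hPE : ∀ C ∈ P, ∀ x ∈ E, x ∉ C} {B : Finset (Fin t)}
    (hB : B ∈ (tildeFP P E hPE).parts) {x y : Fin t} (hx : x ∈ B) (hy : y ∈ B) :
    NF P x y := by
  obtain ⟨m, hm, rfl⟩ := Finset.mem_image.1 hB
  rw [mem_cls] at hx hy
  exact nf_trans hPE hx.1 hm hy.1 (nf_symm hx.2) hy.2

lemma tilde_subset_E {P : Finset (Finset (Fin t))} {E : Finset (Fin t)}
    {hPE : ∀ C ∈ P, ∀ x ∈ E, x ∉ C} {B : Finset (Fin t)}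
    (hB : B ∈ (tildeFP P E hPE).parts) : B ⊆ E := by
  obtain ⟨m, hm, rfl⟩ := Finset.mem_image.1 hB
  exact Finset.filter_subset _ _

/-- π̃ is non-crossing. -/
lemma tilde_isNC (P : Finset (Finset (Fin t))) (E : Finset (Fin t))
    (hPE : ∀ C ∈ P, ∀ x ∈ E, x ∉ C) : IsNC (tildeFP P E hPE).parts := by
  intro i j k l h1 h2 h3 B hB C hC hne hiB hjB hkC hlC
  have hiE : i ∈ E := tilde_subset_E hB hiB
  have hjE : j ∈ E := tilde_subset_E hB hjB
  have hkE : k ∈ E := tilde_subset_E hC hkC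
  have hlE : l ∈ E := tilde_subset_E hC hlC
  have hij : NF P i j := nf_of_mem_tilde hB hiB hjB
  have hkl : NF P k l := nf_of_mem_tilde hC hkC hlC
  have hik : NF P i k := fun C0 hC0 =>
    cross_step h1 h2 h3 (hPE C0 hC0 i hiE) (hPE C0 hC0 j hjE) (hPE C0 hC0 k hkE)
      (hPE C0 hC0 l hlE) (hij C0 hC0) (hkl C0 hC0)
  apply hne
  obtain ⟨b, hb, rfl⟩ := Finset.mem_image.1 hC
  obtain ⟨a, ha, rfl⟩ := Finset.mem_image.1 hB
  rw [mem_cls] at hiB hkC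
  rw [cls_eq hPE hb hkC.1 hkC.2, ← cls_eq hPE hiE hkE hik, cls_eq hPE ha hiB.1 hiB.2]


/-- union of a partition of `D` and one of `E`, as a partition of `univ`. -/
def unionFP (D E : Finset (Fin t)) (hDE : Disjoint D E) (hunion : D ∪ E = Finset.univ)
    (p : Finpartition D) (r : Finpartition E) :
    Finpartition (Finset.univ : Finset (Fin t)) where
  parts := p.parts ∪ r.parts
  supIndep := by
    rw [Finset.supIndep_iff_pairwiseDisjoint]
    intro B hB C hC hne
    simp only [Finset.coe_union, Set.mem_union, Finset.mem_coe] at hB hC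
    rw [Function.onFun, id_eq, id_eq]
    rcases hB with hB | hB <;> rcases hC with hC | hC
    · exact p.supIndep.pairwiseDisjoint hB hC hne
    · exact hDE.mono (p.le hB) (r.le hC)
    · exact hDE.symm.mono (r.le hB) (p.le hC)
    · exact r.supIndep.pairwiseDisjoint hB hC hne
  sup_parts := by
    rw [Finset.sup_union, p.sup_parts, r.sup_parts, Finset.sup_eq_union, hunion]
  bot_notMem := by
    rw [Finset.mem_union]
    rintro (h | h)
    exacts [p.bot_notMem h, r.bot_notMem h]

/-- restriction of a partition of `univ` to `D'`. -/
def restrFP (D' : Finset (Fin t)) (lam : Finpartition (Finset.univ : Finset (Fin t)))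
    (hsup : ∀ x ∈ D', ∃ B ∈ lam.parts, B ⊆ D' ∧ x ∈ B) : Finpartition D' :=
  Finpartition.ofSubset lam (parts := lam.parts.filter (· ⊆ D'))
    (Finset.filter_subset _ _)
    (le_antisymm (Finset.sup_le fun B hB => (Finset.mem_filter.1 hB).2)
      (fun x hx => by
        obtain ⟨B, hB, hBD, hxB⟩ := hsup x hx
        exact Finset.mem_sup.2 ⟨B, Finset.mem_filter.2 ⟨hB, hBD⟩, hxB⟩))

@[simp] lemma restrFP_parts (D' : Finset (Fin t))
    (lam : Finpartition (Finset.univ : Finset (Fin t))) (hsup) :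
    (restrFP D' lam hsup).parts = lam.parts.filter (· ⊆ D') := rfl

/-- forward direction of the key equivalence. -/
lemma forward {D E : Finset (Fin t)} (_hDE : Disjoint D E)
    (p : Finpartition D) (r : Finpartition E)
    (hPE : ∀ C ∈ p.parts, ∀ x ∈ E, x ∉ C)
    (lam : Finpartition (Finset.univ : Finset (Fin t)))
    (hparts : lam.parts = p.parts ∪ r.parts) (hNC : IsNC lam.parts) :
    IsNC r.parts ∧ r ≤ tildeFP p.parts E hPE := by
  constructor
  · exact isNC_subset (hparts ▸ Finset.subset_union_right) hNC
  · intro B hB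
    have hBE : B ⊆ E := r.le hB
    obtain ⟨i, hiB⟩ := r.nonempty_of_mem_parts hB
    refine ⟨cls p.parts E i, Finset.mem_image_of_mem _ (hBE hiB), ?_⟩
    intro j hjB
    refine mem_cls.2 ⟨hBE hjB, ?_⟩
    intro C hC
    have hBlam : B ∈ lam.parts := hparts ▸ Finset.mem_union_right _ hB
    have hClam : C ∈ lam.parts := hparts ▸ Finset.mem_union_left _ hC
    have hne : C ≠ B := by
      rintro rfl
      exact hPE C hC i (hBE hiB) hiB
    exact isNC_no_cross hNC hBlam hClam hne hiB hjB

/-- backward direction : the union partition is non-crossing. -/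
lemma union_isNC {D E : Finset (Fin t)} (hDE : Disjoint D E)
    (hunion : D ∪ E = Finset.univ)
    (p : Finpartition D) (hp : IsNC p.parts) (r : Finpartition E) (hr : IsNC r.parts)
    (hPE : ∀ C ∈ p.parts, ∀ x ∈ E, x ∉ C)
    (hle : r ≤ tildeFP p.parts E hPE) :
    IsNC (unionFP D E hDE hunion p r).parts := by
  intro i j k l h1 h2 h3 B hB C hC hne hiB hjB hkC hlC
  have h1' : i.val < k.val := h1
  have h2' : k.val < j.val := h2
  have h3' : j.val < l.val := h3
  rcases Finset.mem_union.1 hB with hB' | hB' <;> rcases Finset.mem_union.1 hC with hC' | hC'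
  · exact hp i j k l h1 h2 h3 B hB' C hC' hne hiB hjB hkC hlC
  · -- B is a class of p, C a class of r ; then B crosses {k, l}
    obtain ⟨c, hc, hsub⟩ := hle hC'
    have hkl : NF p.parts k l := nf_of_mem_tilde hc (hsub hkC) (hsub hlC)
    exact hkl B hB' ⟨⟨j, hjB, by omega⟩, ⟨i, hiB, by omega⟩⟩
  · -- B is a class of r, C a class of p ; then C crosses {i, j}
    obtain ⟨c, hc, hsub⟩ := hle hB'
    have hij : NF p.parts i j := nf_of_mem_tilde hc (hsub hiB) (hsub hjB)
    exact hij C hC' ⟨⟨k, hkC, by omega⟩, ⟨l, hlC, by omega⟩⟩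
  · exact hr i j k l h1 h2 h3 B hB' C hC' hne hiB hjB hkC hlC

lemma split_parts {D E : Finset (Fin t)}
    (lam : Finpartition (Finset.univ : Finset (Fin t)))
    (hsplit : ∀ B ∈ lam.parts, B ⊆ D ∨ B ⊆ E) :
    lam.parts = lam.parts.filter (· ⊆ D) ∪ lam.parts.filter (· ⊆ E) := by
  ext B
  simp only [Finset.mem_union, Finset.mem_filter]
  constructor
  · intro hB
    rcases hsplit B hB with h | h
    exacts [Or.inl ⟨hB, h⟩, Or.inr ⟨hB, h⟩]
  · rintro (⟨h, _⟩ | ⟨h, _⟩) <;> exact h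

lemma filter_union_left {D E : Finset (Fin t)} (hDE : Disjoint D E)
    (p : Finpartition D) (r : Finpartition E) :
    (p.parts ∪ r.parts).filter (· ⊆ D) = p.parts := by
  ext B
  simp only [Finset.mem_filter, Finset.mem_union]
  constructor
  · rintro ⟨hB | hB, hBD⟩
    · exact hB
    · obtain ⟨x, hx⟩ := r.nonempty_of_mem_parts hB
      exact absurd (hBD hx) (Finset.disjoint_right.1 hDE (r.le hB hx))
  · intro hB
    exact ⟨Or.inl hB, p.le hB⟩

lemma filter_union_right {D E : Finset (Fin t)} (hDE : Disjoint D E)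
    (p : Finpartition D) (r : Finpartition E) :
    (p.parts ∪ r.parts).filter (· ⊆ E) = r.parts := by
  ext B
  simp only [Finset.mem_filter, Finset.mem_union]
  constructor
  · rintro ⟨hB | hB, hBE⟩
    · obtain ⟨x, hx⟩ := p.nonempty_of_mem_parts hB
      exact absurd (hBE hx) (Finset.disjoint_left.1 hDE (p.le hB hx))
    · exact hB
  · intro hB
    exact ⟨Or.inr hB, r.le hB⟩

end Stmt17

/-- let `D, E` be complementary subsets of `{1,...,t}`.  For every
`π ∈ NC(D)` there is a non-crossing partition `π̃` of `E`, maximal with the property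
that a partition `ρ` of `E` satisfies `π ∪ ρ ∈ NC(t)` iff `ρ` is non-crossing and
`ρ ≤ π̃`; and the set of `λ ∈ NC(t)` no class of which meets both `D` and `E` is in
bijection with pairs `(π, ρ)`, `π ∈ NC(D)`, `ρ ∈ NC(E)`, `ρ ≤ π̃`, via
`λ ↦ (λ|_D, λ|_E)`. -/
theorem stmt_17 (t : ℕ) (D E : Finset (Fin t)) (hDE : Disjoint D E)
    (hunion : D ∪ E = Finset.univ) :
    ∃ tilde : {π : Finpartition D // IsNC π.parts} → Finpartition E,
      (∀ π : {π : Finpartition D // IsNC π.parts},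
        IsNC (tilde π).parts ∧
        ∀ ρ : Finpartition E,
          (∃ lam : Finpartition (Finset.univ : Finset (Fin t)),
              lam.parts = π.1.parts ∪ ρ.parts ∧ IsNC lam.parts) ↔
            (IsNC ρ.parts ∧ ρ ≤ tilde π)) ∧
      ∃ e : {lam : Finpartition (Finset.univ : Finset (Fin t)) //
                IsNC lam.parts ∧ ∀ B ∈ lam.parts, B ⊆ D ∨ B ⊆ E} ≃
            {pr : {π : Finpartition D // IsNC π.parts} × Finpartition E //
                IsNC pr.2.parts ∧ pr.2 ≤ tilde pr.1},
        ∀ lam, ((e lam).1.1.1.parts = lam.1.parts.filter (· ⊆ D) ∧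
                (e lam).1.2.parts = lam.1.parts.filter (· ⊆ E)) := by
  have hPE : ∀ (p : Finpartition D), ∀ C ∈ p.parts, ∀ x ∈ E, x ∉ C :=
    fun p C hC x hxE hxC => Finset.disjoint_left.1 hDE (p.le hC hxC) hxE
  refine ⟨fun p => Stmt17.tildeFP p.1.parts E (hPE p.1),
    fun p => ⟨Stmt17.tilde_isNC _ _ _, fun r => ⟨?_, ?_⟩⟩, ?_⟩
  · rintro ⟨lam, hparts, hNC⟩
    exact Stmt17.forward hDE p.1 r (hPE p.1) lam hparts hNC
  · rintro ⟨hr, hle⟩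
    exact ⟨Stmt17.unionFP D E hDE hunion p.1 r, rfl,
      Stmt17.union_isNC hDE hunion p.1 p.2 r hr (hPE p.1) hle⟩
  · have hsupD : ∀ (lam : {lam : Finpartition (Finset.univ : Finset (Fin t)) //
        IsNC lam.parts ∧ ∀ B ∈ lam.parts, B ⊆ D ∨ B ⊆ E}),
        ∀ x ∈ D, ∃ B ∈ lam.1.parts, B ⊆ D ∧ x ∈ B := by
      intro lam x hx
      have hx' : x ∈ lam.1.parts.sup id := by
        rw [lam.1.sup_parts]; exact Finset.mem_univ x
      obtain ⟨B, hB, hxB⟩ := Finset.mem_sup.1 hx'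
      rcases lam.2.2 B hB with h | h
      · exact ⟨B, hB, h, hxB⟩
      · exact absurd (h hxB) (Finset.disjoint_left.1 hDE hx)
    have hsupE : ∀ (lam : {lam : Finpartition (Finset.univ : Finset (Fin t)) //
        IsNC lam.parts ∧ ∀ B ∈ lam.parts, B ⊆ D ∨ B ⊆ E}),
        ∀ x ∈ E, ∃ B ∈ lam.1.parts, B ⊆ E ∧ x ∈ B := by
      intro lam x hx
      have hx' : x ∈ lam.1.parts.sup id := by
        rw [lam.1.sup_parts]; exact Finset.mem_univ x
      obtain ⟨B, hB, hxB⟩ := Finset.mem_sup.1 hx'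
      rcases lam.2.2 B hB with h | h
      · exact absurd (h hxB) (Finset.disjoint_right.1 hDE hx)
      · exact ⟨B, hB, h, hxB⟩
    refine ⟨⟨fun lam => ⟨⟨⟨Stmt17.restrFP D lam.1 (hsupD lam),
        Stmt17.isNC_subset (Finset.filter_subset _ _) lam.2.1⟩,
        Stmt17.restrFP E lam.1 (hsupE lam)⟩,
        Stmt17.forward hDE (Stmt17.restrFP D lam.1 (hsupD lam))
          (Stmt17.restrFP E lam.1 (hsupE lam)) (hPE _) lam.1
          (Stmt17.split_parts lam.1 lam.2.2) lam.2.1⟩,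
      fun pr => ⟨Stmt17.unionFP D E hDE hunion pr.1.1.1 pr.1.2,
        Stmt17.union_isNC hDE hunion pr.1.1.1 pr.1.1.2 pr.1.2 pr.2.1 (hPE _) pr.2.2,
        fun B hB => by
          rcases Finset.mem_union.1 hB with h | h
          · exact Or.inl (pr.1.1.1.le h)
          · exact Or.inr (pr.1.2.le h)⟩,
      fun lam => Subtype.ext (Finpartition.ext
        (Stmt17.split_parts lam.1 lam.2.2).symm),
      fun pr => Subtype.ext (Prod.ext
        (Subtype.ext (Finpartition.ext (Stmt17.filter_union_left hDE pr.1.1.1 pr.1.2)))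
        (Finpartition.ext (Stmt17.filter_union_right hDE pr.1.1.1 pr.1.2)))⟩,
      fun lam => ⟨rfl, rfl⟩⟩
end
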